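/- arXiv:math/0507152 — 6 statements merged into one kernel-verified Lean document; each statement's English description precedes it below -/
import Mathlib

section
/- The tensor Υ_ijk satisfies: (i) it is totally symmetric, Υ_ijk = Υ_(ijk); (ii) it is trace-free, Υ_ijj = 0 for every i; (iii) the quadratic identity Υ_{jki}Υ_{lni} + Υ_{lji}Υ_{kni} + Υ_{kli}Υ_{jni} = g_{jk}g_{ln} + g_{lj}g_{kn} + g_{kl}g_{jn} holds for all indices j,k,l,n (equivalently, Υ_v²v = g(v,v)v for all v ∈ ℝ⁵, where (Υ_v)_{ij} = Υ_{ijk}v_k). -/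
noncomputable section

open Finset

/-- The cubic form Υ(A,A,A) on ℝ⁵. -/
def cubicUps (a : Fin 5 → ℝ) : ℝ :=
  (1/2) * a 0 * (6*(a 1)^2 + 6*(a 3)^2 - 2*(a 0)^2 - 3*(a 2)^2 - 3*(a 4)^2)
  + (3*Real.sqrt 3/2) * a 3 * ((a 4)^2 - (a 2)^2)
  + 3*Real.sqrt 3 * a 1 * a 2 * a 4

/-- The standard inner product g on ℝ⁵, gᵢⱼ = δᵢⱼ. -/
def gKr (i j : Fin 5) : ℝ := if i = j then 1 else 0

/-! ### Auxiliary material -/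

def cZ (i j k : Fin 5) : ℤ :=
  if ((i.val, j.val, k.val) = (0,1,1) ∨ (i.val, j.val, k.val) = (1,0,1) ∨ (i.val, j.val, k.val) = (1,1,0)
      ∨ (i.val, j.val, k.val) = (0,3,3) ∨ (i.val, j.val, k.val) = (3,0,3) ∨ (i.val, j.val, k.val) = (3,3,0)) then 2
  else if (i.val, j.val, k.val) = (0,0,0) then -2
  else if ((i.val, j.val, k.val) = (0,2,2) ∨ (i.val, j.val, k.val) = (2,0,2) ∨ (i.val, j.val, k.val) = (2,2,0)
      ∨ (i.val, j.val, k.val) = (0,4,4) ∨ (i.val, j.val, k.val) = (4,0,4) ∨ (i.val, j.val, k.val) = (4,4,0)) then -1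
  else 0

def dZ (i j k : Fin 5) : ℤ :=
  if ((i.val, j.val, k.val) = (3,4,4) ∨ (i.val, j.val, k.val) = (4,3,4) ∨ (i.val, j.val, k.val) = (4,4,3)
      ∨ (i.val, j.val, k.val) = (1,2,4) ∨ (i.val, j.val, k.val) = (1,4,2) ∨ (i.val, j.val, k.val) = (2,1,4)
      ∨ (i.val, j.val, k.val) = (2,4,1) ∨ (i.val, j.val, k.val) = (4,1,2) ∨ (i.val, j.val, k.val) = (4,2,1)) then 1
  else if ((i.val, j.val, k.val) = (2,2,3) ∨ (i.val, j.val, k.val) = (2,3,2) ∨ (i.val, j.val, k.val) = (3,2,2)) then -1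
  else 0

def gZ (i j : Fin 5) : ℤ := if i = j then 1 else 0

def cR (i j k : Fin 5) : ℝ := ((cZ i j k : ℤ) : ℝ)
def dR (i j k : Fin 5) : ℝ := ((dZ i j k : ℤ) : ℝ)


def F3 (Y : Fin 5 → Fin 5 → Fin 5 → ℝ) (x y z : Fin 5 → ℝ) : ℝ :=
  ∑ i, ∑ j, ∑ k, Y i j k * x i * y j * z k

lemma F3_add1 (Y : Fin 5 → Fin 5 → Fin 5 → ℝ) (x x' y z : Fin 5 → ℝ) :
    F3 Y (x + x') y z = F3 Y x y z + F3 Y x' y z := by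
  unfold F3
  rw [← Finset.sum_add_distrib]
  refine Finset.sum_congr rfl fun i _ => ?_
  rw [← Finset.sum_add_distrib]
  refine Finset.sum_congr rfl fun j _ => ?_
  rw [← Finset.sum_add_distrib]
  refine Finset.sum_congr rfl fun k _ => ?_
  simp only [Pi.add_apply]; ring

lemma F3_add2 (Y : Fin 5 → Fin 5 → Fin 5 → ℝ) (x y y' z : Fin 5 → ℝ) :
    F3 Y x (y + y') z = F3 Y x y z + F3 Y x y' z := by
  unfold F3
  rw [← Finset.sum_add_distrib]
  refine Finset.sum_congr rfl fun i _ => ?_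
  rw [← Finset.sum_add_distrib]
  refine Finset.sum_congr rfl fun j _ => ?_
  rw [← Finset.sum_add_distrib]
  refine Finset.sum_congr rfl fun k _ => ?_
  simp only [Pi.add_apply]; ring

lemma F3_add3 (Y : Fin 5 → Fin 5 → Fin 5 → ℝ) (x y z z' : Fin 5 → ℝ) :
    F3 Y x y (z + z') = F3 Y x y z + F3 Y x y z' := by
  unfold F3
  rw [← Finset.sum_add_distrib]
  refine Finset.sum_congr rfl fun i _ => ?_
  rw [← Finset.sum_add_distrib]
  refine Finset.sum_congr rfl fun j _ => ?_
  rw [← Finset.sum_add_distrib]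
  refine Finset.sum_congr rfl fun k _ => ?_
  simp only [Pi.add_apply]; ring

lemma F3_swap1 (Y : Fin 5 → Fin 5 → Fin 5 → ℝ)
    (h1 : ∀ i j k, Y i j k = Y j i k) (x y z : Fin 5 → ℝ) :
    F3 Y x y z = F3 Y y x z := by
  unfold F3
  rw [Finset.sum_comm]
  refine Finset.sum_congr rfl fun j _ => Finset.sum_congr rfl fun i _ =>
    Finset.sum_congr rfl fun k _ => ?_
  rw [h1 i j k]; ring

lemma F3_swap2 (Y : Fin 5 → Fin 5 → Fin 5 → ℝ)
    (h2 : ∀ i j k, Y i j k = Y i k j) (x y z : Fin 5 → ℝ) :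
    F3 Y x y z = F3 Y x z y := by
  unfold F3
  refine Finset.sum_congr rfl fun i _ => ?_
  rw [Finset.sum_comm]
  refine Finset.sum_congr rfl fun k _ => Finset.sum_congr rfl fun j _ => ?_
  rw [h2 i j k]; ring

def eV (i : Fin 5) : Fin 5 → ℝ := fun t => if t = i then 1 else 0

lemma F3_basis (Y : Fin 5 → Fin 5 → Fin 5 → ℝ) (i j k : Fin 5) :
    F3 Y (eV i) (eV j) (eV k) = Y i j k := by
  unfold F3 eV
  simp [mul_ite, ite_mul, mul_zero, zero_mul, mul_one, one_mul]


lemma F3_polar (Y : Fin 5 → Fin 5 → Fin 5 → ℝ)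
    (h1 : ∀ i j k, Y i j k = Y j i k) (h2 : ∀ i j k, Y i j k = Y i k j)
    (x y z : Fin 5 → ℝ) :
    6 * F3 Y x y z =
      F3 Y (x+y+z) (x+y+z) (x+y+z) - F3 Y (x+y) (x+y) (x+y)
      - F3 Y (x+z) (x+z) (x+z) - F3 Y (y+z) (y+z) (y+z)
      + F3 Y x x x + F3 Y y y y + F3 Y z z z := by
  simp only [F3_add1, F3_add2, F3_add3]
  linarith [F3_swap1 Y h1 x x x, F3_swap2 Y h2 x x x, F3_swap1 Y h1 x x y, F3_swap2 Y h2 x x y, F3_swap1 Y h1 x x z, F3_swap2 Y h2 x x z, F3_swap1 Y h1 x y x, F3_swap2 Y h2 x y x, F3_swap1 Y h1 x y y, F3_swap2 Y h2 x y y, F3_swap1 Y h1 x y z, F3_swap2 Y h2 x y z, F3_swap1 Y h1 x z x, F3_swap2 Y h2 x z x, F3_swap1 Y h1 x z y, F3_swap2 Y h2 x z y, F3_swap1 Y h1 x z z, F3_swap2 Y h2 x z z, F3_swap1 Y h1 y x x, F3_swap2 Y h2 y x x, F3_swap1 Y h1 y x y, F3_swap2 Y h2 y x y, F3_swap1 Y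 h1 y x z, F3_swap2 Y h2 y x z, F3_swap1 Y h1 y y x, F3_swap2 Y h2 y y x, F3_swap1 Y h1 y y y, F3_swap2 Y h2 y y y, F3_swap1 Y h1 y y z, F3_swap2 Y h2 y y z, F3_swap1 Y h1 y z x, F3_swap2 Y h2 y z x, F3_swap1 Y h1 y z y, F3_swap2 Y h2 y z y, F3_swap1 Y h1 y z z, F3_swap2 Y h2 y z z, F3_swap1 Y h1 z x x, F3_swap2 Y h2 z x x, F3_swap1 Y h1 z x y, F3_swap2 Y h2 z x y, F3_swap1 Y h1 z x z, F3_swap2 Y h2 z x z, F3_swap1 Y h1 z y x, F3_swap2 Y h2 z y x, F3_swap1 Y h1 z y y, F3_swap2 Y h2 z y y, F3_swap1 Y h1 z y z, F3_swap2 Y h2 z y z, F3_swap1 Y h1 z z x, F3_swap2 Y h2 z z x, F3_swap1 Y h1 z z y, F3_swap2 Y h2 z z y, F3_swap1 Y h1 z z z, F3_swap2 Y h2 z z z]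

lemma gcast (i j : Fin 5) : ((gZ i j : ℤ) : ℝ) = gKr i j := by
  by_cases h : i = j <;> simp [gZ, gKr, h]

set_option maxHeartbeats 4000000 in
/-- the totally symmetric tensor Υ with Υ_ijk aⁱaʲaᵏ = Υ(A,A,A) is
(i) totally symmetric, (ii) trace-free and (iii) satisfies the quadratic identity
Υ_{jki}Υ_{lni} + Υ_{lji}Υ_{kni} + Υ_{kli}Υ_{jni} = g_{jk}g_{ln} + g_{lj}g_{kn} + g_{kl}g_{jn}. -/
theorem stmt0 (Y : Fin 5 → Fin 5 → Fin 5 → ℝ)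
    (hsym1 : ∀ i j k, Y i j k = Y j i k)
    (hsym2 : ∀ i j k, Y i j k = Y i k j)
    (hcub : ∀ a : Fin 5 → ℝ,
      ∑ i, ∑ j, ∑ k, Y i j k * a i * a j * a k = cubicUps a) :
    (∀ i j k, Y i j k = Y j i k ∧ Y i j k = Y i k j) ∧
    (∀ i, ∑ j, Y i j j = 0) ∧
    (∀ j k l n, ∑ i, (Y j k i * Y l n i + Y l j i * Y k n i + Y k l i * Y j n i)
      = gKr j k * gKr l n + gKr l j * gKr k n + gKr k l * gKr j n) := by
  have hs : Real.sqrt 3 ^ 2 = 3 := Real.sq_sqrt (by norm_num)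
  have hY6 : ∀ i j k, 6 * Y i j k =
      cubicUps (eV i + eV j + eV k) - cubicUps (eV i + eV j)
      - cubicUps (eV i + eV k) - cubicUps (eV j + eV k)
      + cubicUps (eV i) + cubicUps (eV j) + cubicUps (eV k) := by
    intro i j k
    have h := F3_polar Y hsym1 hsym2 (eV i) (eV j) (eV k)
    rw [F3_basis] at h
    simp only [F3, hcub] at h
    exact h
  have hY : ∀ i j k, Y i j k = cR i j k / 2 + dR i j k / 2 * Real.sqrt 3 := by
    intro i j k
    have h := hY6 i j k
    fin_cases i <;> fin_cases j <;> fin_cases k <;>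
      (norm_num (config := { decide := true }) [cubicUps, eV, cR, dR, cZ, dZ, Pi.add_apply] at h ⊢ <;> linarith)
  refine ⟨fun i j k => ⟨hsym1 i j k, hsym2 i j k⟩, ?_, ?_⟩
  · intro i
    have c0 : ∀ i : Fin 5, (∑ j, cZ i j j) = 0 ∧ (∑ j, dZ i j j) = 0 := by decide
    have c0R : (∑ j, cR i j j) = 0 := by
      have := congrArg (fun t : ℤ => (t : ℝ)) (c0 i).1
      push_cast at this
      simpa [cR] using this
    have d0R : (∑ j, dR i j j) = 0 := by
      have := congrArg (fun t : ℤ => (t : ℝ)) (c0 i).2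
      push_cast at this
      simpa [dR] using this
    calc ∑ j, Y i j j = ∑ j, (cR i j j / 2 + dR i j j / 2 * Real.sqrt 3) :=
          Finset.sum_congr rfl fun j _ => hY i j j
      _ = (∑ j, cR i j j) / 2 + (∑ j, dR i j j) / 2 * Real.sqrt 3 := by
          rw [Finset.sum_add_distrib, ← Finset.sum_div, ← Finset.sum_mul, ← Finset.sum_div]
      _ = 0 := by rw [c0R, d0R]; norm_num
  · intro j k l n
    have QA : ∀ j k l n : Fin 5,
        (∑ i, (cZ j k i * cZ l n i + cZ l j i * cZ k n i + cZ k l i * cZ j n i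
          + 3*(dZ j k i * dZ l n i + dZ l j i * dZ k n i + dZ k l i * dZ j n i)))
        = 4 * (gZ j k * gZ l n + gZ l j * gZ k n + gZ k l * gZ j n) := by decide
    have QB : ∀ j k l n : Fin 5,
        (∑ i, (cZ j k i * dZ l n i + dZ j k i * cZ l n i + cZ l j i * dZ k n i
          + dZ l j i * cZ k n i + cZ k l i * dZ j n i + dZ k l i * cZ j n i)) = 0 := by decide
    have QAR : (∑ i, (cR j k i * cR l n i + cR l j i * cR k n i + cR k l i * cR j n i
          + 3*(dR j k i * dR l n i + dR l j i * dR k n i + dR k l i * dR j n i)))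
        = 4 * (((gZ j k : ℤ):ℝ) * ((gZ l n : ℤ):ℝ) + ((gZ l j : ℤ):ℝ) * ((gZ k n : ℤ):ℝ)
          + ((gZ k l : ℤ):ℝ) * ((gZ j n : ℤ):ℝ)) := by
      have := congrArg (fun t : ℤ => (t : ℝ)) (QA j k l n)
      push_cast at this
      simpa [cR, dR] using this
    have QBR : (∑ i, (cR j k i * dR l n i + dR j k i * cR l n i + cR l j i * dR k n i
          + dR l j i * cR k n i + cR k l i * dR j n i + dR k l i * cR j n i)) = 0 := by
      have := congrArg (fun t : ℤ => (t : ℝ)) (QB j k l n)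
      push_cast at this
      simpa [cR, dR] using this
    have key : ∀ c1 d1 c2 d2 c3 d3 c4 d4 c5 d5 c6 d6 : ℝ,
        (c1/2 + d1/2*Real.sqrt 3)*(c2/2 + d2/2*Real.sqrt 3)
        + (c3/2 + d3/2*Real.sqrt 3)*(c4/2 + d4/2*Real.sqrt 3)
        + (c5/2 + d5/2*Real.sqrt 3)*(c6/2 + d6/2*Real.sqrt 3)
        = (c1*c2 + c3*c4 + c5*c6 + 3*(d1*d2 + d3*d4 + d5*d6))/4
          + (c1*d2 + d1*c2 + c3*d4 + d3*c4 + c5*d6 + d5*c6)/4 * Real.sqrt 3 := by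
      intros c1 d1 c2 d2 c3 d3 c4 d4 c5 d5 c6 d6
      linear_combination ((d1*d2 + d3*d4 + d5*d6)/4) * hs
    calc ∑ i, (Y j k i * Y l n i + Y l j i * Y k n i + Y k l i * Y j n i)
        = ∑ i, ((cR j k i * cR l n i + cR l j i * cR k n i + cR k l i * cR j n i
            + 3*(dR j k i * dR l n i + dR l j i * dR k n i + dR k l i * dR j n i))/4
          + (cR j k i * dR l n i + dR j k i * cR l n i + cR l j i * dR k n i
            + dR l j i * cR k n i + cR k l i * dR j n i + dR k l i * cR j n i)/4 * Real.sqrt 3) := by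
          refine Finset.sum_congr rfl fun i _ => ?_
          rw [hY j k i, hY l n i, hY l j i, hY k n i, hY k l i, hY j n i, key]
      _ = (∑ i, (cR j k i * cR l n i + cR l j i * cR k n i + cR k l i * cR j n i
            + 3*(dR j k i * dR l n i + dR l j i * dR k n i + dR k l i * dR j n i)))/4
          + (∑ i, (cR j k i * dR l n i + dR j k i * cR l n i + cR l j i * dR k n i
            + dR l j i * cR k n i + cR k l i * dR j n i + dR k l i * cR j n i))/4 * Real.sqrt 3 := by
          rw [Finset.sum_add_distrib, ← Finset.sum_div, ← Finset.sum_mul, ← Finset.sum_div]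
      _ = gKr j k * gKr l n + gKr l j * gKr k n + gKr k l * gKr j n := by
          rw [QAR, QBR, gcast, gcast, gcast, gcast, gcast, gcast]
          ring
end
end

section
/- For every h ∈ SO(3) (a real 3×3 matrix with hhᵀ = I and det h = 1), the linear map ρ(h) : ℝ⁵ → ℝ⁵ defined by ρ(h)A = σ⁻¹(h·σ(A)·hᵀ) preserves both the standard inner product and the cubic form Υ: g(ρ(h)A, ρ(h)A) = g(A,A) and Υ(ρ(h)A, ρ(h)A, ρ(h)A) = Υ(A,A,A) for all A ∈ ℝ⁵; in particular ρ(h) is an orthogonal transformation of ℝ⁵ stabilizing Υ. -/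
noncomputable section

open Finset Matrix

/-- The identification σ of ℝ⁵ with symmetric traceless 3×3 matrices. -/
def sigmaMap (a : Fin 5 → ℝ) : Matrix (Fin 3) (Fin 3) ℝ :=
  !![a 0 / Real.sqrt 3 - a 3, a 1, a 2;
     a 1, a 0 / Real.sqrt 3 + a 3, a 4;
     a 2, a 4, -2 * a 0 / Real.sqrt 3]

lemma sqrt3_pos : (0:ℝ) < Real.sqrt 3 := Real.sqrt_pos.mpr (by norm_num)

lemma sqrt3_sq : Real.sqrt 3 * Real.sqrt 3 = 3 :=
  Real.mul_self_sqrt (by norm_num)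

lemma trace_sq (a : Fin 5 → ℝ) :
    (sigmaMap a * sigmaMap a).trace = 2 * ∑ i, a i * a i := by
  have h3 := sqrt3_sq
  have hne : Real.sqrt 3 ≠ 0 := ne_of_gt sqrt3_pos
  simp [sigmaMap, Matrix.trace_fin_three, Matrix.mul_apply, Fin.sum_univ_three,
    Fin.sum_univ_five]
  field_simp
  have p2 : Real.sqrt 3 ^ 2 = 3 := Real.sq_sqrt (by norm_num)
  have p3 : Real.sqrt 3 ^ 3 = 3 * Real.sqrt 3 := by rw [pow_succ, p2]
  have p4 : Real.sqrt 3 ^ 4 = 9 := by rw [pow_succ, p3, mul_assoc, h3]; norm_num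
  have p5 : Real.sqrt 3 ^ 5 = 9 * Real.sqrt 3 := by rw [pow_succ, p4]
  have p6 : Real.sqrt 3 ^ 6 = 27 := by rw [pow_succ, p5, mul_assoc, h3]; norm_num
  ring_nf
  simp only [p2, p3, p4, p5, p6]
  ring

lemma det_cubic (a : Fin 5 → ℝ) :
    cubicUps a = (3 * Real.sqrt 3 / 2) * (sigmaMap a).det := by
  have h3 := sqrt3_sq
  have hne : Real.sqrt 3 ≠ 0 := ne_of_gt sqrt3_pos
  simp [cubicUps, sigmaMap, Matrix.det_fin_three]
  field_simp
  have p2 : Real.sqrt 3 ^ 2 = 3 := Real.sq_sqrt (by norm_num)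
  have p3 : Real.sqrt 3 ^ 3 = 3 * Real.sqrt 3 := by rw [pow_succ, p2]
  have p4 : Real.sqrt 3 ^ 4 = 9 := by rw [pow_succ, p3, mul_assoc, h3]; norm_num
  have p5 : Real.sqrt 3 ^ 5 = 9 * Real.sqrt 3 := by rw [pow_succ, p4]
  have p6 : Real.sqrt 3 ^ 6 = 27 := by rw [pow_succ, p5, mul_assoc, h3]; norm_num
  ring_nf
  simp only [p2, p3, p4, p5, p6]
  ring

/-- for h ∈ SO(3), the map ρ(h) = σ⁻¹ ∘ (h·σ(·)·hᵀ) preserves the standard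
inner product and the cubic form Υ; i.e. if σ(B) = h·σ(A)·hᵀ (so B = ρ(h)A), then
g(B,B) = g(A,A) and Υ(B,B,B) = Υ(A,A,A). -/
theorem stmt4 (h : Matrix (Fin 3) (Fin 3) ℝ) (horth : h * hᵀ = 1) (hdet : h.det = 1)
    (A B : Fin 5 → ℝ) (hB : sigmaMap B = h * sigmaMap A * hᵀ) :
    (∑ i, B i * B i = ∑ i, A i * A i) ∧ cubicUps B = cubicUps A := by
  have horth' : hᵀ * h = 1 := mul_eq_one_comm.mp horth
  constructor
  · have key : (sigmaMap B * sigmaMap B).trace = (sigmaMap A * sigmaMap A).trace := by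
      rw [hB]
      have : h * sigmaMap A * hᵀ * (h * sigmaMap A * hᵀ)
          = h * (sigmaMap A * sigmaMap A) * hᵀ := by
        calc h * sigmaMap A * hᵀ * (h * sigmaMap A * hᵀ)
            = h * sigmaMap A * (hᵀ * h) * sigmaMap A * hᵀ := by
              simp only [Matrix.mul_assoc]
          _ = h * (sigmaMap A * sigmaMap A) * hᵀ := by
              rw [horth']; simp [Matrix.mul_assoc]
      rw [this, Matrix.trace_mul_cycle, ← Matrix.mul_assoc, horth', Matrix.one_mul]
    have tA := trace_sq A
    have tB := trace_sq B
    rw [key, tA] at tB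
    linarith
  · rw [det_cubic, det_cubic, hB]
    rw [Matrix.det_mul, Matrix.det_mul, hdet, Matrix.det_transpose, hdet]
    ring
end
end

section
/- Let ⋎ be an admissible trilinear form on ℝ⁵. Then for every pair of orthogonal vectors v, w ∈ ℝ⁵ (g(v,w) = 0) the identity g(v,v)·w = 2·⋎_v²w + ⋎_w(⋎_v v) holds. -/
noncomputable section

open Finset Matrix

/-- The linear map ⋎_v associated to a trilinear form ⋎, (⋎_v)_{ij} = ⋎_{ijk}v_k. -/
def Vmat (V : Fin 5 → Fin 5 → Fin 5 → ℝ) (v : Fin 5 → ℝ) : Matrix (Fin 5) (Fin 5) ℝ :=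
  Matrix.of fun i j => ∑ k, V i j k * v k

/-- A trilinear form ⋎ is admissible if it is totally symmetric, trace-free and
satisfies ⋎_v²v = g(v,v)·v for all v ∈ ℝ⁵. -/
def Admissible (V : Fin 5 → Fin 5 → Fin 5 → ℝ) : Prop :=
  (∀ i j k, V i j k = V j i k) ∧ (∀ i j k, V i j k = V i k j) ∧
  (∀ v : Fin 5 → ℝ, ∑ i, Vmat V v i i = 0) ∧
  (∀ v : Fin 5 → ℝ, (Vmat V v * Vmat V v).mulVec v = (∑ i, v i * v i) • v)

lemma Vmat_add (V : Fin 5 → Fin 5 → Fin 5 → ℝ) (v w : Fin 5 → ℝ) :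
    Vmat V (v + w) = Vmat V v + Vmat V w := by
  ext i j
  simp [Vmat, mul_add, Finset.sum_add_distrib]

lemma Vmat_sub (V : Fin 5 → Fin 5 → Fin 5 → ℝ) (v w : Fin 5 → ℝ) :
    Vmat V (v - w) = Vmat V v - Vmat V w := by
  ext i j
  simp [Vmat, mul_sub, Finset.sum_sub_distrib]

lemma Vmat_symm (V : Fin 5 → Fin 5 → Fin 5 → ℝ) (hs : ∀ i j k, V i j k = V i k j)
    (v w : Fin 5 → ℝ) : (Vmat V w).mulVec v = (Vmat V v).mulVec w := by
  funext i
  simp only [Matrix.mulVec, dotProduct, Vmat, Matrix.of_apply]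
  simp_rw [Finset.sum_mul]
  rw [Finset.sum_comm]
  apply Finset.sum_congr rfl; intro j _
  apply Finset.sum_congr rfl; intro k _
  rw [hs i k j]; ring

lemma key (A B : Matrix (Fin 5) (Fin 5) ℝ) (v w : Fin 5 → ℝ) (c d : ℝ)
    (hBv : B.mulVec v = A.mulVec w)
    (hw : (B * B).mulVec w = d • w)
    (h1 : ((A + B) * (A + B)).mulVec (v + w) = (c + d) • (v + w))
    (h2 : ((A - B) * (A - B)).mulVec (v - w) = (c + d) • (v - w)) :
    c • w = (2 : ℝ) • A.mulVec (A.mulVec w) + B.mulVec (A.mulVec v) := by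
  simp only [Matrix.add_mul, Matrix.mul_add, Matrix.sub_mul, Matrix.mul_sub,
    Matrix.add_mulVec, Matrix.mulVec_add, Matrix.sub_mulVec, Matrix.mulVec_sub,
    ← Matrix.mulVec_mulVec] at h1 h2 hw
  rw [hBv] at h1 h2
  funext i
  have e1 := congrFun h1 i
  have e2 := congrFun h2 i
  have e3 := congrFun hw i
  simp only [Pi.add_apply, Pi.sub_apply, Pi.smul_apply, smul_eq_mul] at e1 e2 e3 ⊢
  linarith

/-- for an admissible ⋎ and orthogonal vectors v,w,
g(v,v)·w = 2·⋎_v²w + ⋎_w(⋎_v v). -/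
theorem stmt9 (V : Fin 5 → Fin 5 → Fin 5 → ℝ) (hV : Admissible V)
    (v w : Fin 5 → ℝ) (hvw : ∑ i, v i * w i = 0) :
    (∑ i, v i * v i) • w =
      (2 : ℝ) • (Vmat V v).mulVec ((Vmat V v).mulVec w)
        + (Vmat V w).mulVec ((Vmat V v).mulVec v) := by
  obtain ⟨hs1, hs2, htr, hcube⟩ := hV
  have h1 := hcube (v + w)
  have h2 := hcube (v - w)
  have hw := hcube w
  rw [Vmat_add] at h1
  rw [Vmat_sub] at h2
  have hn1 : (∑ i, (v + w) i * (v + w) i) = (∑ i, v i * v i) + (∑ i, w i * w i) := by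
    have : ∀ i ∈ Finset.univ, (v + w) i * (v + w) i
        = v i * v i + w i * w i + 2 * (v i * w i) := by
      intro i _; simp [Pi.add_apply]; ring
    rw [Finset.sum_congr rfl this]
    simp [Finset.sum_add_distrib, ← Finset.mul_sum, hvw]
  have hn2 : (∑ i, (v - w) i * (v - w) i) = (∑ i, v i * v i) + (∑ i, w i * w i) := by
    have : ∀ i ∈ Finset.univ, (v - w) i * (v - w) i
        = v i * v i + w i * w i - 2 * (v i * w i) := by
      intro i _; simp [Pi.sub_apply]; ring
    rw [Finset.sum_congr rfl this]
    simp [Finset.sum_sub_distrib, Finset.sum_add_distrib, ← Finset.mul_sum, hvw]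
  rw [hn1] at h1
  rw [hn2] at h2
  exact key (Vmat V v) (Vmat V w) v w _ _ (Vmat_symm V hs2 v w) hw h1 h2
end
end

section
/- For the operator Υ̌ on symmetric 5×5 real matrices defined by (Υ̌S)_{kl} = 4·Υ_{klm}Υ_{ijm}S_{ij}: if S is symmetric with Υ̂(S) = 14·S or Υ̂(S) = 4·S then Υ̌(S) = 0, and if S is symmetric with Υ̂(S) = −3·S then Υ̌(S) = 14·S. Moreover the map S ↦ (Υ_{ijk}S_{jk})_{i=1..5} restricts to a linear isomorphism from the eigenvalue-(−3) eigenspace of Υ̂ in Sym² onto ℝ⁵. -/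
/-!
Polarization identifies Υ with an explicit tensor, which is trace-free and satisfies
Υ_{m(ij}Υ_{kl)m} = g_{(ij}g_{kl)}; contracted with a symmetric S, the latter reads
Υ̂S = 4S + 2 tr(S)·I − ½Υ̌S. Write Υ(v) for the matrix (Υ_{klm}v_m). Then Υ̌S = 4Υ(ῪS) and
Ὺ(Υ(v)) = (7/2)v, so applying Ὺ and the trace to Υ̂S = λS gives (λ + 3)ῪS = 0 and
(λ − 14) tr S = 0. For λ = 14, 4 this forces ῪS = 0, hence Υ̌S = 0; for λ = −3 it forces
tr S = 0, and the quartic identity becomes Υ̌S = 14S, i.e. S = (2/7)Υ(ῪS). So v ↦ (2/7)Υ(v)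
inverts Ὺ on the (−3)-eigenspace.
-/

noncomputable section

open Finset Matrix

/-- The endomorphism Υ̂ of ⊗²ℝ⁵: (Υ̂W)_{ik} = 4·Υ_{ijm}Υ_{klm}W_{jl}. -/
def hatMap (Y : Fin 5 → Fin 5 → Fin 5 → ℝ) (W : Matrix (Fin 5) (Fin 5) ℝ) :
    Matrix (Fin 5) (Fin 5) ℝ :=
  Matrix.of fun i k => 4 * ∑ j, ∑ l, ∑ m, Y i j m * Y k l m * W j l

/-- The endomorphism Υ̌: (Υ̌S)_{kl} = 4·Υ_{klm}Υ_{ijm}S_{ij}. -/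
def checkMap (Y : Fin 5 → Fin 5 → Fin 5 → ℝ) (S : Matrix (Fin 5) (Fin 5) ℝ) :
    Matrix (Fin 5) (Fin 5) ℝ :=
  Matrix.of fun k l => 4 * ∑ i, ∑ j, ∑ m, Y k l m * Y i j m * S i j

/-- The map Ὺ : S ↦ (Υ_{ijk}S_{jk})ᵢ. -/
def graveMap (Y : Fin 5 → Fin 5 → Fin 5 → ℝ) (S : Matrix (Fin 5) (Fin 5) ℝ)
    (i : Fin 5) : ℝ :=
  ∑ j, ∑ k, Y i j k * S j k

section Tensor

variable {ι : Type*} [Fintype ι]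

def trilinForm (Y : ι → ι → ι → ℝ) (x y z : ι → ℝ) : ℝ :=
  ∑ i, ∑ j, ∑ k, Y i j k * x i * y j * z k

lemma trilinForm_comm₁₂ {Y : ι → ι → ι → ℝ} (hY : ∀ i j k, Y i j k = Y j i k)
    (x y z : ι → ℝ) : trilinForm Y x y z = trilinForm Y y x z := by
  unfold trilinForm
  rw [sum_comm]
  refine sum_congr rfl fun i _ => sum_congr rfl fun j _ => sum_congr rfl fun k _ => ?_
  rw [hY]; ring

lemma trilinForm_comm₂₃ {Y : ι → ι → ι → ℝ} (hY : ∀ i j k, Y i j k = Y i k j)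
    (x y z : ι → ℝ) : trilinForm Y x y z = trilinForm Y x z y := by
  unfold trilinForm
  refine sum_congr rfl fun i _ => ?_
  rw [sum_comm]
  refine sum_congr rfl fun j _ => sum_congr rfl fun k _ => ?_
  rw [hY]; ring

lemma trilinForm_single [DecidableEq ι] (Y : ι → ι → ι → ℝ) (i j k : ι) :
    trilinForm Y (Pi.single i 1) (Pi.single j 1) (Pi.single k 1) = Y i j k := by
  simp [trilinForm, Pi.single_apply]

lemma six_mul_trilinForm {Y : ι → ι → ι → ℝ} (h₁₂ : ∀ i j k, Y i j k = Y j i k)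
    (h₂₃ : ∀ i j k, Y i j k = Y i k j) (a b c : ι → ℝ) :
    6 * trilinForm Y a b c =
      trilinForm Y (a + b + c) (a + b + c) (a + b + c) - trilinForm Y (a + b) (a + b) (a + b)
        - trilinForm Y (a + c) (a + c) (a + c) - trilinForm Y (b + c) (b + c) (b + c)
        + trilinForm Y a a a + trilinForm Y b b b + trilinForm Y c c c := by
  have expand : trilinForm Y (a + b + c) (a + b + c) (a + b + c)
      - trilinForm Y (a + b) (a + b) (a + b) - trilinForm Y (a + c) (a + c) (a + c)
      - trilinForm Y (b + c) (b + c) (b + c) + trilinForm Y a a a + trilinForm Y b b b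
      + trilinForm Y c c c =
      trilinForm Y a b c + trilinForm Y a c b + trilinForm Y b a c + trilinForm Y b c a
        + trilinForm Y c a b + trilinForm Y c b a := by
    simp only [trilinForm, Pi.add_apply, ← sum_add_distrib, ← sum_sub_distrib]
    refine sum_congr rfl fun i _ => sum_congr rfl fun j _ => sum_congr rfl fun k _ => ?_
    ring
  rw [expand]
  linarith [trilinForm_comm₂₃ h₂₃ a b c, trilinForm_comm₁₂ h₁₂ a b c, trilinForm_comm₂₃ h₂₃ b a c,
    trilinForm_comm₁₂ h₁₂ a c b, trilinForm_comm₁₂ h₁₂ b c a]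

lemma eq_of_trilinForm_diag_eq [DecidableEq ι] {Y Z : ι → ι → ι → ℝ}
    (hY₁₂ : ∀ i j k, Y i j k = Y j i k) (hY₂₃ : ∀ i j k, Y i j k = Y i k j)
    (hZ₁₂ : ∀ i j k, Z i j k = Z j i k) (hZ₂₃ : ∀ i j k, Z i j k = Z i k j)
    (h : ∀ a, trilinForm Y a a a = trilinForm Z a a a) : Y = Z := by
  funext i j k
  have hY := six_mul_trilinForm hY₁₂ hY₂₃ (Pi.single i 1) (Pi.single j 1) (Pi.single k 1)
  have hZ := six_mul_trilinForm hZ₁₂ hZ₂₃ (Pi.single i 1) (Pi.single j 1) (Pi.single k 1)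
  simp only [h, trilinForm_single] at hY hZ
  linarith

def tensorSlice (Y : ι → ι → ι → ℝ) (v : ι → ℝ) : Matrix ι ι ℝ :=
  of fun k l => ∑ m, Y k l m * v m

lemma tensorSlice_transpose {Y : ι → ι → ι → ℝ}
    (h₁₂ : ∀ i j k, Y i j k = Y j i k) (v : ι → ℝ) : (tensorSlice Y v)ᵀ = tensorSlice Y v := by
  ext k l
  simp only [tensorSlice, transpose_apply, of_apply, h₁₂ l k]

@[simp]
lemma tensorSlice_zero (Y : ι → ι → ι → ℝ) : tensorSlice Y 0 = 0 := by
  ext k l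
  simp [tensorSlice]

lemma tensorSlice_smul (Y : ι → ι → ι → ℝ) (c : ℝ) (v : ι → ℝ) :
    tensorSlice Y (c • v) = c • tensorSlice Y v := by
  ext k l
  simp only [tensorSlice, of_apply, Matrix.smul_apply, Pi.smul_apply, smul_eq_mul, mul_sum]
  exact sum_congr rfl fun m _ => by ring

end Tensor

section Contraction

variable (Y : Fin 5 → Fin 5 → Fin 5 → ℝ)

lemma graveMap_add (A B : Matrix (Fin 5) (Fin 5) ℝ) :
    graveMap Y (A + B) = graveMap Y A + graveMap Y B := by
  funext i
  simp only [graveMap, Matrix.add_apply, Pi.add_apply, mul_add, sum_add_distrib]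

lemma graveMap_sub (A B : Matrix (Fin 5) (Fin 5) ℝ) :
    graveMap Y (A - B) = graveMap Y A - graveMap Y B := by
  funext i
  simp only [graveMap, Matrix.sub_apply, Pi.sub_apply, mul_sub, sum_sub_distrib]

lemma graveMap_smul (c : ℝ) (A : Matrix (Fin 5) (Fin 5) ℝ) :
    graveMap Y (c • A) = c • graveMap Y A := by
  funext i
  simp only [graveMap, Matrix.smul_apply, Pi.smul_apply, smul_eq_mul, mul_sum]
  exact sum_congr rfl fun j _ => sum_congr rfl fun k _ => by ring

variable {Y}

lemma graveMap_one (htrace : ∀ i, ∑ j, Y i j j = 0) : graveMap Y 1 = 0 := by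
  funext i
  simp [graveMap, one_apply, htrace]

lemma checkMap_eq_smul_tensorSlice (h₁₂ : ∀ i j k, Y i j k = Y j i k)
    (h₂₃ : ∀ i j k, Y i j k = Y i k j) (S : Matrix (Fin 5) (Fin 5) ℝ) :
    checkMap Y S = (4 : ℝ) • tensorSlice Y (graveMap Y S) := by
  ext k l
  simp only [checkMap, tensorSlice, graveMap, of_apply, Matrix.smul_apply, smul_eq_mul, mul_sum]
  rw [sum_comm_cycle]
  refine sum_congr rfl fun m _ => sum_congr rfl fun i _ => sum_congr rfl fun j _ => ?_
  rw [h₁₂ m i j, h₂₃ i m j]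
  ring

lemma trace_tensorSlice (h₁₂ : ∀ i j k, Y i j k = Y j i k) (h₂₃ : ∀ i j k, Y i j k = Y i k j)
    (htrace : ∀ i, ∑ j, Y i j j = 0) (v : Fin 5 → ℝ) : trace (tensorSlice Y v) = 0 := by
  simp only [trace, diag_apply, tensorSlice, of_apply]
  rw [sum_comm]
  refine sum_eq_zero fun m _ => ?_
  simp only [h₂₃ _ _ m, h₁₂ _ m, ← sum_mul, htrace, zero_mul]

lemma graveMap_tensorSlice (h₁₂ : ∀ i j k, Y i j k = Y j i k)
    (h₂₃ : ∀ i j k, Y i j k = Y i k j) {c : ℝ}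
    (hcontract : ∀ i l, ∑ j, ∑ k, Y i j k * Y l j k = c * (1 : Matrix (Fin 5) (Fin 5) ℝ) i l)
    (v : Fin 5 → ℝ) : graveMap Y (tensorSlice Y v) = c • v := by
  funext i
  have hcontract' :
      ∀ m, ∑ j, ∑ k, Y i j k * Y j k m = c * (1 : Matrix (Fin 5) (Fin 5) ℝ) i m := by
    intro m
    rw [← hcontract]
    refine sum_congr rfl fun j _ => sum_congr rfl fun k _ => ?_
    rw [h₂₃ j k m, h₁₂ j m k]
  calc graveMap Y (tensorSlice Y v) i
      = ∑ m, (∑ j, ∑ k, Y i j k * Y j k m) * v m := by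
        simp only [graveMap, tensorSlice, of_apply, mul_sum, sum_mul]
        rw [sum_comm_cycle]
        exact sum_congr rfl fun m _ => sum_congr rfl fun j _ => sum_congr rfl fun k _ => by ring
    _ = (c • v) i := by simp [hcontract', one_apply]

end Contraction

/-- The identities characterizing the tensor Υ of an SO(3)-structure in dimension five: total
symmetry, trace-freeness, and `Υ_{m(ij}Υ_{kl)m} = g_{(ij}g_{kl)}`, which is equivalent to
`hatMap_eq` because a totally symmetric 4-tensor vanishing on all symmetric `S_{jl}` is zero. -/
structure IsUpsilonTensor (Y : Fin 5 → Fin 5 → Fin 5 → ℝ) : Prop where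
  symm₁₂ : ∀ i j k, Y i j k = Y j i k
  symm₂₃ : ∀ i j k, Y i j k = Y i k j
  trace_eq_zero : ∀ i, ∑ j, Y i j j = 0
  hatMap_eq : ∀ S : Matrix (Fin 5) (Fin 5) ℝ, Sᵀ = S →
    hatMap Y S = (4 : ℝ) • S + (2 * trace S) • 1 - (1 / 2 : ℝ) • checkMap Y S

namespace IsUpsilonTensor

variable {Y : Fin 5 → Fin 5 → Fin 5 → ℝ} {S : Matrix (Fin 5) (Fin 5) ℝ} {μ : ℝ}

lemma checkMap_eq (hY : IsUpsilonTensor Y) (S : Matrix (Fin 5) (Fin 5) ℝ) :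
    checkMap Y S = (4 : ℝ) • tensorSlice Y (graveMap Y S) :=
  checkMap_eq_smul_tensorSlice hY.symm₁₂ hY.symm₂₃ S

lemma contract (hY : IsUpsilonTensor Y) (i l : Fin 5) :
    ∑ j, ∑ k, Y i j k * Y l j k = 7 / 2 * (1 : Matrix (Fin 5) (Fin 5) ℝ) i l := by
  have key := congrFun (congrFun (hY.hatMap_eq 1 transpose_one) i) l
  rw [hY.checkMap_eq, graveMap_one hY.trace_eq_zero, tensorSlice_zero, trace_one] at key
  simp only [hatMap, of_apply, one_apply, mul_ite, mul_one, mul_zero, sum_ite_irrel,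
    sum_const_zero, sum_ite_eq, mem_univ, ↓reduceIte, Fintype.card_fin, Nat.cast_ofNat,
    smul_zero, Matrix.sub_apply, Matrix.add_apply, Matrix.smul_apply, smul_eq_mul,
    Matrix.zero_apply, sub_zero] at key
  rw [one_apply]
  split_ifs at key ⊢ <;> linarith

lemma graveMap_tensorSlice (hY : IsUpsilonTensor Y) (v : Fin 5 → ℝ) :
    graveMap Y (tensorSlice Y v) = (7 / 2 : ℝ) • v :=
  _root_.graveMap_tensorSlice hY.symm₁₂ hY.symm₂₃ hY.contract v

lemma smul_graveMap_of_hatMap_eq (hY : IsUpsilonTensor Y) (hS : Sᵀ = S)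
    (h : hatMap Y S = μ • S) : (μ + 3) • graveMap Y S = 0 := by
  have key := congrArg (graveMap Y) (h.symm.trans (hY.hatMap_eq S hS))
  simp only [hY.checkMap_eq, graveMap_sub, graveMap_add, graveMap_smul,
    graveMap_one hY.trace_eq_zero, hY.graveMap_tensorSlice] at key
  linear_combination (norm := module) key

lemma mul_trace_of_hatMap_eq (hY : IsUpsilonTensor Y) (hS : Sᵀ = S)
    (h : hatMap Y S = μ • S) : (μ - 14) * trace S = 0 := by
  have key := congrArg trace (h.symm.trans (hY.hatMap_eq S hS))
  simp only [hY.checkMap_eq, trace_sub, trace_add, trace_smul, trace_one,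
    trace_tensorSlice hY.symm₁₂ hY.symm₂₃ hY.trace_eq_zero, Fintype.card_fin,
    smul_eq_mul] at key
  linear_combination key

lemma checkMap_eq_zero_of_hatMap_eq (hY : IsUpsilonTensor Y) (hS : Sᵀ = S)
    (h : hatMap Y S = μ • S) (hμ : μ ≠ -3) : checkMap Y S = 0 := by
  have hgrave : graveMap Y S = 0 :=
    (smul_eq_zero.mp (hY.smul_graveMap_of_hatMap_eq hS h)).resolve_left
      (by contrapose! hμ; linarith)
  rw [hY.checkMap_eq, hgrave, tensorSlice_zero, smul_zero]

lemma checkMap_eq_of_hatMap_eq_neg_three (hY : IsUpsilonTensor Y) (hS : Sᵀ = S)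
    (h : hatMap Y S = (-3 : ℝ) • S) : checkMap Y S = (14 : ℝ) • S := by
  have htrace : trace S = 0 := by linarith [hY.mul_trace_of_hatMap_eq hS h]
  have key := h.symm.trans (hY.hatMap_eq S hS)
  rw [htrace, mul_zero, zero_smul, add_zero] at key
  linear_combination (norm := module) 2 • key

lemma eq_smul_tensorSlice_of_hatMap_eq_neg_three (hY : IsUpsilonTensor Y) (hS : Sᵀ = S)
    (h : hatMap Y S = (-3 : ℝ) • S) : S = (2 / 7 : ℝ) • tensorSlice Y (graveMap Y S) := by
  have key := hY.checkMap_eq_of_hatMap_eq_neg_three hS h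
  rw [hY.checkMap_eq] at key
  linear_combination (norm := module) (-(1 / 14 : ℝ)) • key

lemma hatMap_smul_tensorSlice (hY : IsUpsilonTensor Y) (v : Fin 5 → ℝ) :
    hatMap Y ((2 / 7 : ℝ) • tensorSlice Y v) = (-3 : ℝ) • ((2 / 7 : ℝ) • tensorSlice Y v) := by
  have hsymm : ((2 / 7 : ℝ) • tensorSlice Y v)ᵀ = (2 / 7 : ℝ) • tensorSlice Y v := by
    rw [transpose_smul, tensorSlice_transpose hY.symm₁₂]
  rw [hY.hatMap_eq _ hsymm, hY.checkMap_eq, graveMap_smul, hY.graveMap_tensorSlice, trace_smul,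
    trace_tensorSlice hY.symm₁₂ hY.symm₂₃ hY.trace_eq_zero, tensorSlice_smul, tensorSlice_smul]
  module

lemma graveMap_smul_tensorSlice (hY : IsUpsilonTensor Y) (v : Fin 5 → ℝ) :
    graveMap Y ((2 / 7 : ℝ) • tensorSlice Y v) = v := by
  rw [graveMap_smul, hY.graveMap_tensorSlice, smul_smul]
  norm_num

end IsUpsilonTensor

/-- `Υ_{ijk}` is the coefficient of `aᵢaⱼaₖ` in `cubicUps a`, divided by the number of distinct
permutations of `(i, j, k)`. -/
def upsilon : Fin 5 → Fin 5 → Fin 5 → ℝ :=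
  ![![![-1, 0, 0, 0, 0], ![0, 1, 0, 0, 0], ![0, 0, -1 / 2, 0, 0], ![0, 0, 0, 1, 0],
      ![0, 0, 0, 0, -1 / 2]],
    ![![0, 1, 0, 0, 0], ![1, 0, 0, 0, 0], ![0, 0, 0, 0, √3 / 2], ![0, 0, 0, 0, 0],
      ![0, 0, √3 / 2, 0, 0]],
    ![![0, 0, -1 / 2, 0, 0], ![0, 0, 0, 0, √3 / 2], ![-1 / 2, 0, 0, -√3 / 2, 0],
      ![0, 0, -√3 / 2, 0, 0], ![0, √3 / 2, 0, 0, 0]],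
    ![![0, 0, 0, 1, 0], ![0, 0, 0, 0, 0], ![0, 0, -√3 / 2, 0, 0], ![1, 0, 0, 0, 0],
      ![0, 0, 0, 0, √3 / 2]],
    ![![0, 0, 0, 0, -1 / 2], ![0, 0, √3 / 2, 0, 0], ![0, √3 / 2, 0, 0, 0],
      ![0, 0, 0, 0, √3 / 2], ![-1 / 2, 0, 0, √3 / 2, 0]]]

lemma upsilon_symm₁₂ (i j k : Fin 5) : upsilon i j k = upsilon j i k := by
  fin_cases i <;> fin_cases j <;> fin_cases k <;> rfl

lemma upsilon_symm₂₃ (i j k : Fin 5) : upsilon i j k = upsilon i k j := by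
  fin_cases i <;> fin_cases j <;> fin_cases k <;> rfl

lemma trilinForm_upsilon (a : Fin 5 → ℝ) : trilinForm upsilon a a a = cubicUps a := by
  simp only [trilinForm, upsilon, cons_val', cons_val_fin_one, Fin.sum_univ_five, Fin.isValue,
    cons_val_zero, cons_val_one, Matrix.cons_val, neg_mul, one_mul, zero_mul, add_zero, zero_add,
    cubicUps]
  ring

lemma upsilon_trace_eq_zero (i : Fin 5) : ∑ j, upsilon i j j = 0 := by
  fin_cases i <;>
    simp only [upsilon, Fin.zero_eta, Fin.mk_one, Fin.reduceFinMk, Fin.isValue, cons_val',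
      cons_val_fin_one, cons_val_zero, cons_val_one, Matrix.cons_val, Fin.sum_univ_five] <;>
    ring

set_option maxHeartbeats 4000000 in
lemma hatMap_upsilon (S : Matrix (Fin 5) (Fin 5) ℝ) (hS : Sᵀ = S) :
    hatMap upsilon S = (4 : ℝ) • S + (2 * trace S) • 1 - (1 / 2 : ℝ) • checkMap upsilon S := by
  have h3 : √3 ^ 2 = 3 := Real.sq_sqrt (by norm_num)
  -- only the entries `S i j` with `i ≤ j` remain, so that `ring` sees the symmetry of `S`
  have hS' : S = of fun i j => if i ≤ j then S i j else S j i := by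
    ext i j
    rw [of_apply]
    split_ifs
    · rfl
    · exact (congrFun (congrFun hS i) j).symm
  rw [hS']
  ext p q
  fin_cases p <;> fin_cases q <;>
    simp only [hatMap, checkMap, trace, diag_apply, of_apply, upsilon, cons_val',
      cons_val_fin_one, Fin.sum_univ_five, Fin.isValue, cons_val_zero, cons_val_one,
      Matrix.cons_val, Matrix.add_apply, Matrix.sub_apply, Matrix.smul_apply, smul_eq_mul,
      one_apply, Fin.reduceLE, Fin.reduceEq, ↓reduceIte, Fin.zero_eta, Fin.mk_one,
      Fin.reduceFinMk, mul_zero, zero_mul, add_zero, zero_add, mul_one] <;>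
    ring_nf <;> simp only [h3] <;> ring_nf

lemma isUpsilonTensor_upsilon : IsUpsilonTensor upsilon :=
  ⟨upsilon_symm₁₂, upsilon_symm₂₃, upsilon_trace_eq_zero, hatMap_upsilon⟩

/-- Υ̌ vanishes on the eigenvalue-14 and eigenvalue-4 eigenspaces of Υ̂ in
Sym², equals 14·id on the eigenvalue-(−3) eigenspace, and S ↦ (Υ_{ijk}S_{jk})ᵢ is a
linear isomorphism from the eigenvalue-(−3) eigenspace onto ℝ⁵. -/
theorem stmt14 (Y : Fin 5 → Fin 5 → Fin 5 → ℝ)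
    (hsym1 : ∀ i j k, Y i j k = Y j i k)
    (hsym2 : ∀ i j k, Y i j k = Y i k j)
    (hcub : ∀ a : Fin 5 → ℝ,
      ∑ i, ∑ j, ∑ k, Y i j k * a i * a j * a k = cubicUps a) :
    (∀ S : Matrix (Fin 5) (Fin 5) ℝ, Sᵀ = S → hatMap Y S = (14 : ℝ) • S →
      checkMap Y S = 0) ∧
    (∀ S : Matrix (Fin 5) (Fin 5) ℝ, Sᵀ = S → hatMap Y S = (4 : ℝ) • S →
      checkMap Y S = 0) ∧
    (∀ S : Matrix (Fin 5) (Fin 5) ℝ, Sᵀ = S → hatMap Y S = (-3 : ℝ) • S →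
      checkMap Y S = (14 : ℝ) • S) ∧
    -- the restriction of Ὺ to the eigenvalue-(−3) eigenspace is injective …
    (∀ S S' : Matrix (Fin 5) (Fin 5) ℝ,
      Sᵀ = S → hatMap Y S = (-3 : ℝ) • S →
      S'ᵀ = S' → hatMap Y S' = (-3 : ℝ) • S' →
      graveMap Y S = graveMap Y S' → S = S') ∧
    -- … and surjective onto ℝ⁵
    (∀ v : Fin 5 → ℝ, ∃ S : Matrix (Fin 5) (Fin 5) ℝ,
      Sᵀ = S ∧ hatMap Y S = (-3 : ℝ) • S ∧ graveMap Y S = v) := by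
  obtain rfl : Y = upsilon :=
    eq_of_trilinForm_diag_eq hsym1 hsym2 upsilon_symm₁₂ upsilon_symm₂₃
      fun a => (hcub a).trans (trilinForm_upsilon a).symm
  have hY := isUpsilonTensor_upsilon
  refine ⟨fun S hS h => hY.checkMap_eq_zero_of_hatMap_eq hS h (by norm_num),
    fun S hS h => hY.checkMap_eq_zero_of_hatMap_eq hS h (by norm_num),
    fun S hS h => hY.checkMap_eq_of_hatMap_eq_neg_three hS h, ?_, ?_⟩
  · intro S S' hS h hS' h' hgrave
    rw [hY.eq_smul_tensorSlice_of_hatMap_eq_neg_three hS h,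
      hY.eq_smul_tensorSlice_of_hatMap_eq_neg_three hS' h', hgrave]
  · intro v
    refine ⟨(2 / 7 : ℝ) • tensorSlice upsilon v, ?_, hY.hatMap_smul_tensorSlice v,
      hY.graveMap_smul_tensorSlice v⟩
    rw [transpose_smul, tensorSlice_transpose hY.symm₁₂]
end
end

section
/- Let (b₁,b₂,b₃) ∈ ℝ³ with b₁² + b₂² + b₃² = 1 and let ω = b₁E₁ + b₂E₂ + b₃E₃, regarded as a complex 5×5 matrix. If n ∈ ℂ⁵ satisfies ωn = 2i·n (or ωn = −2i·n), then n is null for the complexified tensor Υ: Υ_ℂ(n,n,v) = 0 for every v ∈ ℂ⁵, where Υ_ℂ is the ℂ-trilinear extension of Υ, i.e. Υ_{ijk}n_jn_k = 0 for every i. -/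
set_option maxRecDepth 8000
set_option maxHeartbeats 1600000

noncomputable section

open Finset Matrix

def E1 : Matrix (Fin 5) (Fin 5) ℝ :=
  !![0,0,0,0,Real.sqrt 3; 0,0,1,0,0; 0,-1,0,0,0; 0,0,0,0,1; -Real.sqrt 3,0,0,-1,0]

def E2 : Matrix (Fin 5) (Fin 5) ℝ :=
  !![0,0,Real.sqrt 3,0,0; 0,0,0,0,1; -Real.sqrt 3,0,0,1,0; 0,0,-1,0,0; 0,-1,0,0,0]

def E3 : Matrix (Fin 5) (Fin 5) ℝ :=
  !![0,0,0,0,0; 0,0,0,2,0; 0,0,0,0,1; 0,-2,0,0,0; 0,0,-1,0,0]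

/-- auxiliary: quadratic-in-(u,v) form `Υ(e_i, u, v)`-like contraction. -/
def S (Y : Fin 5 → Fin 5 → Fin 5 → ℝ) (i : Fin 5) (u v : Fin 5 → ℝ) : ℝ :=
  ∑ j, ∑ k, Y i j k * u j * v k

/-- auxiliary: polarization polynomial `Υ(e_i+x)+Υ(e_i-x)-2Υ(e_i)`. -/
def gq (i : Fin 5) (x : Fin 5 → ℝ) : ℝ :=
  cubicUps (fun m => (if m = i then 1 else 0) + x m)
  + cubicUps (fun m => (if m = i then 1 else 0) - x m)
  - 2 * cubicUps (fun m => if m = i then 1 else 0)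

/-- auxiliary: the action of `ω = b₁E₁+b₂E₂+b₃E₃` on a real vector, componentwise. -/
def wv (b1 b2 b3 : ℝ) (x : Fin 5 → ℝ) : Fin 5 → ℝ :=
  ![ b2*Real.sqrt 3*x 2 + b1*Real.sqrt 3*x 4,
     b1*x 2 + 2*b3*x 3 + b2*x 4,
     -(b2*Real.sqrt 3)*x 0 - b1*x 1 + b2*x 3 + b3*x 4,
     -(2*b3)*x 1 - b2*x 2 + b1*x 4,
     -(b1*Real.sqrt 3)*x 0 - b2*x 1 - b3*x 2 - b1*x 3 ]

lemma fin5cases : ∀ i : Fin 5, i = 0 ∨ i = 1 ∨ i = 2 ∨ i = 3 ∨ i = 4 := by decide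


lemma quadId (Y : Fin 5 → Fin 5 → Fin 5 → ℝ)
    (hsym1 : ∀ i j k, Y i j k = Y j i k)
    (hsym2 : ∀ i j k, Y i j k = Y i k j)
    (hcub : ∀ a : Fin 5 → ℝ,
      ∑ i, ∑ j, ∑ k, Y i j k * a i * a j * a k = cubicUps a) :
    ∀ (i : Fin 5) (x : Fin 5 → ℝ), 6 * S Y i x x = gq i x := by
  intro i x
  unfold gq
  rw [← hcub, ← hcub, ← hcub]
  unfold S
  rcases fin5cases i with rfl | rfl | rfl | rfl | rfl
  · simp only [Fin.sum_univ_five, Fin.reduceEq, reduceIte]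
    linear_combination (4*x 0*x 0)*hsym1 0 0 0 - (2*x 0*x 0)*hsym2 0 0 0 + (4*x 0*x 1)*hsym1 0 0 1 - (2*x 0*x 1)*hsym2 0 1 0 + (4*x 0*x 2)*hsym1 0 0 2 - (2*x 0*x 2)*hsym2 0 2 0 + (4*x 0*x 3)*hsym1 0 0 3 - (2*x 0*x 3)*hsym2 0 3 0 + (4*x 0*x 4)*hsym1 0 0 4 - (2*x 0*x 4)*hsym2 0 4 0 + (4*x 1*x 0)*hsym1 0 1 0 - (2*x 1*x 0)*hsym2 1 0 0 + (4*x 1*x 1)*hsym1 0 1 1 - (2*x 1*x 1)*hsym2 1 1 0 + (4*x 1*x 2)*hsym1 0 1 2 - (2*x 1*x 2)*hsym2 1 2 0 + (4*x 1*x 3)*hsym1 0 1 3 - (2*x 1*x 3)*hsym2 1 3 0 + (4*x 1*x 4)*hsym1 0 1 4 - (2*x 1*x 4)*hsym2 1 4 0 + (4*x 2*x 0)*hsym1 0 2 0 - (2*x 2*x 0)*hsym2 2 0 0 + (4*x 2*x 1)*hsym1 0 2 1 - (2*x 2*x 1)*hsym2 2 1 0 + (4*x 2*x 2)*hsym1 0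 2 2 - (2*x 2*x 2)*hsym2 2 2 0 + (4*x 2*x 3)*hsym1 0 2 3 - (2*x 2*x 3)*hsym2 2 3 0 + (4*x 2*x 4)*hsym1 0 2 4 - (2*x 2*x 4)*hsym2 2 4 0 + (4*x 3*x 0)*hsym1 0 3 0 - (2*x 3*x 0)*hsym2 3 0 0 + (4*x 3*x 1)*hsym1 0 3 1 - (2*x 3*x 1)*hsym2 3 1 0 + (4*x 3*x 2)*hsym1 0 3 2 - (2*x 3*x 2)*hsym2 3 2 0 + (4*x 3*x 3)*hsym1 0 3 3 - (2*x 3*x 3)*hsym2 3 3 0 + (4*x 3*x 4)*hsym1 0 3 4 - (2*x 3*x 4)*hsym2 3 4 0 + (4*x 4*x 0)*hsym1 0 4 0 - (2*x 4*x 0)*hsym2 4 0 0 + (4*x 4*x 1)*hsym1 0 4 1 - (2*x 4*x 1)*hsym2 4 1 0 + (4*x 4*x 2)*hsym1 0 4 2 - (2*x 4*x 2)*hsym2 4 2 0 + (4*x 4*x 3)*hsym1 0 4 3 - (2*x 4*x 3)*hsym2 4 3 0 + (4*x 4*x 4)*hsym1 0 4 4 - (2*x 4*x 4)*hsym2 4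 4 0
  · simp only [Fin.sum_univ_five, Fin.reduceEq, reduceIte]
    linear_combination (4*x 0*x 0)*hsym1 1 0 0 - (2*x 0*x 0)*hsym2 0 0 1 + (4*x 0*x 1)*hsym1 1 0 1 - (2*x 0*x 1)*hsym2 0 1 1 + (4*x 0*x 2)*hsym1 1 0 2 - (2*x 0*x 2)*hsym2 0 2 1 + (4*x 0*x 3)*hsym1 1 0 3 - (2*x 0*x 3)*hsym2 0 3 1 + (4*x 0*x 4)*hsym1 1 0 4 - (2*x 0*x 4)*hsym2 0 4 1 + (4*x 1*x 0)*hsym1 1 1 0 - (2*x 1*x 0)*hsym2 1 0 1 + (4*x 1*x 1)*hsym1 1 1 1 - (2*x 1*x 1)*hsym2 1 1 1 + (4*x 1*x 2)*hsym1 1 1 2 - (2*x 1*x 2)*hsym2 1 2 1 + (4*x 1*x 3)*hsym1 1 1 3 - (2*x 1*x 3)*hsym2 1 3 1 + (4*x 1*x 4)*hsym1 1 1 4 - (2*x 1*x 4)*hsym2 1 4 1 + (4*x 2*x 0)*hsym1 1 2 0 - (2*x 2*x 0)*hsym2 2 0 1 + (4*x 2*x 1)*hsym1 1 2 1 - (2*x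 2*x 1)*hsym2 2 1 1 + (4*x 2*x 2)*hsym1 1 2 2 - (2*x 2*x 2)*hsym2 2 2 1 + (4*x 2*x 3)*hsym1 1 2 3 - (2*x 2*x 3)*hsym2 2 3 1 + (4*x 2*x 4)*hsym1 1 2 4 - (2*x 2*x 4)*hsym2 2 4 1 + (4*x 3*x 0)*hsym1 1 3 0 - (2*x 3*x 0)*hsym2 3 0 1 + (4*x 3*x 1)*hsym1 1 3 1 - (2*x 3*x 1)*hsym2 3 1 1 + (4*x 3*x 2)*hsym1 1 3 2 - (2*x 3*x 2)*hsym2 3 2 1 + (4*x 3*x 3)*hsym1 1 3 3 - (2*x 3*x 3)*hsym2 3 3 1 + (4*x 3*x 4)*hsym1 1 3 4 - (2*x 3*x 4)*hsym2 3 4 1 + (4*x 4*x 0)*hsym1 1 4 0 - (2*x 4*x 0)*hsym2 4 0 1 + (4*x 4*x 1)*hsym1 1 4 1 - (2*x 4*x 1)*hsym2 4 1 1 + (4*x 4*x 2)*hsym1 1 4 2 - (2*x 4*x 2)*hsym2 4 2 1 + (4*x 4*x 3)*hsym1 1 4 3 - (2*x 4*x 3)*hsym2 4 3 1 + (4*x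 4*x 4)*hsym1 1 4 4 - (2*x 4*x 4)*hsym2 4 4 1
  · simp only [Fin.sum_univ_five, Fin.reduceEq, reduceIte]
    linear_combination (4*x 0*x 0)*hsym1 2 0 0 - (2*x 0*x 0)*hsym2 0 0 2 + (4*x 0*x 1)*hsym1 2 0 1 - (2*x 0*x 1)*hsym2 0 1 2 + (4*x 0*x 2)*hsym1 2 0 2 - (2*x 0*x 2)*hsym2 0 2 2 + (4*x 0*x 3)*hsym1 2 0 3 - (2*x 0*x 3)*hsym2 0 3 2 + (4*x 0*x 4)*hsym1 2 0 4 - (2*x 0*x 4)*hsym2 0 4 2 + (4*x 1*x 0)*hsym1 2 1 0 - (2*x 1*x 0)*hsym2 1 0 2 + (4*x 1*x 1)*hsym1 2 1 1 - (2*x 1*x 1)*hsym2 1 1 2 + (4*x 1*x 2)*hsym1 2 1 2 - (2*x 1*x 2)*hsym2 1 2 2 + (4*x 1*x 3)*hsym1 2 1 3 - (2*x 1*x 3)*hsym2 1 3 2 + (4*x 1*x 4)*hsym1 2 1 4 - (2*x 1*x 4)*hsym2 1 4 2 + (4*x 2*x 0)*hsym1 2 2 0 - (2*x 2*x 0)*hsym2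 2 0 2 + (4*x 2*x 1)*hsym1 2 2 1 - (2*x 2*x 1)*hsym2 2 1 2 + (4*x 2*x 2)*hsym1 2 2 2 - (2*x 2*x 2)*hsym2 2 2 2 + (4*x 2*x 3)*hsym1 2 2 3 - (2*x 2*x 3)*hsym2 2 3 2 + (4*x 2*x 4)*hsym1 2 2 4 - (2*x 2*x 4)*hsym2 2 4 2 + (4*x 3*x 0)*hsym1 2 3 0 - (2*x 3*x 0)*hsym2 3 0 2 + (4*x 3*x 1)*hsym1 2 3 1 - (2*x 3*x 1)*hsym2 3 1 2 + (4*x 3*x 2)*hsym1 2 3 2 - (2*x 3*x 2)*hsym2 3 2 2 + (4*x 3*x 3)*hsym1 2 3 3 - (2*x 3*x 3)*hsym2 3 3 2 + (4*x 3*x 4)*hsym1 2 3 4 - (2*x 3*x 4)*hsym2 3 4 2 + (4*x 4*x 0)*hsym1 2 4 0 - (2*x 4*x 0)*hsym2 4 0 2 + (4*x 4*x 1)*hsym1 2 4 1 - (2*x 4*x 1)*hsym2 4 1 2 + (4*x 4*x 2)*hsym1 2 4 2 - (2*x 4*x 2)*hsym2 4 2 2 + (4*x 4*x 3)*hsym1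 2 4 3 - (2*x 4*x 3)*hsym2 4 3 2 + (4*x 4*x 4)*hsym1 2 4 4 - (2*x 4*x 4)*hsym2 4 4 2
  · simp only [Fin.sum_univ_five, Fin.reduceEq, reduceIte]
    linear_combination (4*x 0*x 0)*hsym1 3 0 0 - (2*x 0*x 0)*hsym2 0 0 3 + (4*x 0*x 1)*hsym1 3 0 1 - (2*x 0*x 1)*hsym2 0 1 3 + (4*x 0*x 2)*hsym1 3 0 2 - (2*x 0*x 2)*hsym2 0 2 3 + (4*x 0*x 3)*hsym1 3 0 3 - (2*x 0*x 3)*hsym2 0 3 3 + (4*x 0*x 4)*hsym1 3 0 4 - (2*x 0*x 4)*hsym2 0 4 3 + (4*x 1*x 0)*hsym1 3 1 0 - (2*x 1*x 0)*hsym2 1 0 3 + (4*x 1*x 1)*hsym1 3 1 1 - (2*x 1*x 1)*hsym2 1 1 3 + (4*x 1*x 2)*hsym1 3 1 2 - (2*x 1*x 2)*hsym2 1 2 3 + (4*x 1*x 3)*hsym1 3 1 3 - (2*x 1*x 3)*hsym2 1 3 3 + (4*x 1*x 4)*hsym1 3 1 4 - (2*x 1*x 4)*hsym2 1 4 3 +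 (4*x 2*x 0)*hsym1 3 2 0 - (2*x 2*x 0)*hsym2 2 0 3 + (4*x 2*x 1)*hsym1 3 2 1 - (2*x 2*x 1)*hsym2 2 1 3 + (4*x 2*x 2)*hsym1 3 2 2 - (2*x 2*x 2)*hsym2 2 2 3 + (4*x 2*x 3)*hsym1 3 2 3 - (2*x 2*x 3)*hsym2 2 3 3 + (4*x 2*x 4)*hsym1 3 2 4 - (2*x 2*x 4)*hsym2 2 4 3 + (4*x 3*x 0)*hsym1 3 3 0 - (2*x 3*x 0)*hsym2 3 0 3 + (4*x 3*x 1)*hsym1 3 3 1 - (2*x 3*x 1)*hsym2 3 1 3 + (4*x 3*x 2)*hsym1 3 3 2 - (2*x 3*x 2)*hsym2 3 2 3 + (4*x 3*x 3)*hsym1 3 3 3 - (2*x 3*x 3)*hsym2 3 3 3 + (4*x 3*x 4)*hsym1 3 3 4 - (2*x 3*x 4)*hsym2 3 4 3 + (4*x 4*x 0)*hsym1 3 4 0 - (2*x 4*x 0)*hsym2 4 0 3 + (4*x 4*x 1)*hsym1 3 4 1 - (2*x 4*x 1)*hsym2 4 1 3 + (4*x 4*x 2)*hsym1 3 4 2 -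 (2*x 4*x 2)*hsym2 4 2 3 + (4*x 4*x 3)*hsym1 3 4 3 - (2*x 4*x 3)*hsym2 4 3 3 + (4*x 4*x 4)*hsym1 3 4 4 - (2*x 4*x 4)*hsym2 4 4 3
  · simp only [Fin.sum_univ_five, Fin.reduceEq, reduceIte]
    linear_combination (4*x 0*x 0)*hsym1 4 0 0 - (2*x 0*x 0)*hsym2 0 0 4 + (4*x 0*x 1)*hsym1 4 0 1 - (2*x 0*x 1)*hsym2 0 1 4 + (4*x 0*x 2)*hsym1 4 0 2 - (2*x 0*x 2)*hsym2 0 2 4 + (4*x 0*x 3)*hsym1 4 0 3 - (2*x 0*x 3)*hsym2 0 3 4 + (4*x 0*x 4)*hsym1 4 0 4 - (2*x 0*x 4)*hsym2 0 4 4 + (4*x 1*x 0)*hsym1 4 1 0 - (2*x 1*x 0)*hsym2 1 0 4 + (4*x 1*x 1)*hsym1 4 1 1 - (2*x 1*x 1)*hsym2 1 1 4 + (4*x 1*x 2)*hsym1 4 1 2 - (2*x 1*x 2)*hsym2 1 2 4 + (4*x 1*x 3)*hsym1 4 1 3 - (2*x 1*x 3)*hsym2 1 3 4 + (4*x 1*x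 4)*hsym1 4 1 4 - (2*x 1*x 4)*hsym2 1 4 4 + (4*x 2*x 0)*hsym1 4 2 0 - (2*x 2*x 0)*hsym2 2 0 4 + (4*x 2*x 1)*hsym1 4 2 1 - (2*x 2*x 1)*hsym2 2 1 4 + (4*x 2*x 2)*hsym1 4 2 2 - (2*x 2*x 2)*hsym2 2 2 4 + (4*x 2*x 3)*hsym1 4 2 3 - (2*x 2*x 3)*hsym2 2 3 4 + (4*x 2*x 4)*hsym1 4 2 4 - (2*x 2*x 4)*hsym2 2 4 4 + (4*x 3*x 0)*hsym1 4 3 0 - (2*x 3*x 0)*hsym2 3 0 4 + (4*x 3*x 1)*hsym1 4 3 1 - (2*x 3*x 1)*hsym2 3 1 4 + (4*x 3*x 2)*hsym1 4 3 2 - (2*x 3*x 2)*hsym2 3 2 4 + (4*x 3*x 3)*hsym1 4 3 3 - (2*x 3*x 3)*hsym2 3 3 4 + (4*x 3*x 4)*hsym1 4 3 4 - (2*x 3*x 4)*hsym2 3 4 4 + (4*x 4*x 0)*hsym1 4 4 0 - (2*x 4*x 0)*hsym2 4 0 4 + (4*x 4*x 1)*hsym1 4 4 1 - (2*x 4*x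 1)*hsym2 4 1 4 + (4*x 4*x 2)*hsym1 4 4 2 - (2*x 4*x 2)*hsym2 4 2 4 + (4*x 4*x 3)*hsym1 4 4 3 - (2*x 4*x 3)*hsym2 4 3 4 + (4*x 4*x 4)*hsym1 4 4 4 - (2*x 4*x 4)*hsym2 4 4 4

lemma invId (b1 b2 b3 : ℝ) (x : Fin 5 → ℝ) (m : Fin 5) :
    gq m (fun j => wv b1 b2 b3 x j + x j) - gq m (wv b1 b2 b3 x) - gq m x
      = wv b1 b2 b3 (fun i => gq i x) m := by
  have hs3 : Real.sqrt 3 ^ 2 = 3 := Real.sq_sqrt (by norm_num)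
  rcases fin5cases m with rfl | rfl | rfl | rfl | rfl
  · simp only [gq, cubicUps, wv, Matrix.cons_val_zero, Matrix.cons_val_one, Matrix.head_cons,
      Matrix.cons_val_two, Matrix.tail_cons, Matrix.cons_val_three, Matrix.cons_val_four,
      Fin.reduceEq, reduceIte]
    linear_combination ((6)*b2*x 2*x 3 + (-6)*b2*x 1*x 4 + (-6)*b1*x 3*x 4 + (-6)*b1*x 1*x 2) * hs3
  · simp only [gq, cubicUps, wv, Matrix.cons_val_zero, Matrix.cons_val_one, Matrix.head_cons,
      Matrix.cons_val_two, Matrix.tail_cons, Matrix.cons_val_three, Matrix.cons_val_four,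
      Fin.reduceEq, reduceIte]
    linear_combination ((-6)*b2*x 0*x 4 + (-6)*b1*x 0*x 2) * hs3
  · simp only [gq, cubicUps, wv, Matrix.cons_val_zero, Matrix.cons_val_one, Matrix.head_cons,
      Matrix.cons_val_two, Matrix.tail_cons, Matrix.cons_val_three, Matrix.cons_val_four,
      Fin.reduceEq, reduceIte]
    linear_combination ((6)*b2*x 0*x 3 + (-6)*b1*x 0*x 1) * hs3
  · simp only [gq, cubicUps, wv, Matrix.cons_val_zero, Matrix.cons_val_one, Matrix.head_cons,
      Matrix.cons_val_two, Matrix.tail_cons, Matrix.cons_val_three, Matrix.cons_val_four,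
      Fin.reduceEq, reduceIte]
    linear_combination ((6)*b2*x 0*x 2 + (-6)*b1*x 0*x 4) * hs3
  · simp only [gq, cubicUps, wv, Matrix.cons_val_zero, Matrix.cons_val_one, Matrix.head_cons,
      Matrix.cons_val_two, Matrix.tail_cons, Matrix.cons_val_three, Matrix.cons_val_four,
      Fin.reduceEq, reduceIte]
    linear_combination ((-6)*b2*x 0*x 1 + (-6)*b1*x 0*x 3) * hs3

lemma quintId (b1 b2 b3 : ℝ) (hb : b1^2 + b2^2 + b3^2 = 1) (x : Fin 5 → ℝ) (m : Fin 5) :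
    wv b1 b2 b3 (wv b1 b2 b3 (wv b1 b2 b3 (wv b1 b2 b3 (wv b1 b2 b3 x)))) m
      + 5 * wv b1 b2 b3 (wv b1 b2 b3 (wv b1 b2 b3 x)) m + 4 * wv b1 b2 b3 x m = 0 := by
  have hs3 : Real.sqrt 3 ^ 2 = 3 := Real.sq_sqrt (by norm_num)
  rcases fin5cases m with rfl | rfl | rfl | rfl | rfl
  · simp only [wv, Matrix.cons_val_zero, Matrix.cons_val_one, Matrix.head_cons,
      Matrix.cons_val_two, Matrix.tail_cons, Matrix.cons_val_three, Matrix.cons_val_four]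
    linear_combination ((-4)*b2*(Real.sqrt 3)*x 2 + b2*b3*b3*(Real.sqrt 3)*x 2 + (15)*b2*b2*b3*(Real.sqrt 3)*x 1 + (16)*b2*b2*b2*(Real.sqrt 3)*x 2 + (-4)*b1*(Real.sqrt 3)*x 4 + b1*b3*b3*(Real.sqrt 3)*x 4 + (30)*b1*b2*b3*(Real.sqrt 3)*x 3 + (16)*b1*b2*b2*(Real.sqrt 3)*x 4 + (-15)*b1*b1*b3*(Real.sqrt 3)*x 1 + (16)*b1*b1*b2*(Real.sqrt 3)*x 2 + (16)*b1*b1*b1*(Real.sqrt 3)*x 4) * hb + ((-5)*b2*b2*b2*(Real.sqrt 3)*x 2 + (2)*b2*b2*b2*b3*b3*(Real.sqrt 3)*x 2 + (3)*b2*b2*b2*b2*b3*(Real.sqrt 3)*x 1 + (5)*b2*b2*b2*b2*b2*(Real.sqrt 3)*x 2 + b2*b2*b2*b2*b2*(Real.sqrt 3)*(Real.sqrt 3)*(Real.sqrt 3)*x 2 + (-5)*b1*b2*b2*(Real.sqrt 3)*x 4 + (2)*b1*b2*b2*b3*b3*(Real.sqrt 3)*x 4 + (6)*b1*b2*b2*b2*b3*(Real.sqrt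 3)*x 3 + (5)*b1*b2*b2*b2*b2*(Real.sqrt 3)*x 4 + b1*b2*b2*b2*b2*(Real.sqrt 3)*(Real.sqrt 3)*(Real.sqrt 3)*x 4 + (-5)*b1*b1*b2*(Real.sqrt 3)*x 2 + (2)*b1*b1*b2*b3*b3*(Real.sqrt 3)*x 2 + (10)*b1*b1*b2*b2*b2*(Real.sqrt 3)*x 2 + (2)*b1*b1*b2*b2*b2*(Real.sqrt 3)*(Real.sqrt 3)*(Real.sqrt 3)*x 2 + (-5)*b1*b1*b1*(Real.sqrt 3)*x 4 + (2)*b1*b1*b1*b3*b3*(Real.sqrt 3)*x 4 + (6)*b1*b1*b1*b2*b3*(Real.sqrt 3)*x 3 + (10)*b1*b1*b1*b2*b2*(Real.sqrt 3)*x 4 + (2)*b1*b1*b1*b2*b2*(Real.sqrt 3)*(Real.sqrt 3)*(Real.sqrt 3)*x 4 + (-3)*b1*b1*b1*b1*b3*(Real.sqrt 3)*x 1 + (5)*b1*b1*b1*b1*b2*(Real.sqrt 3)*x 2 + b1*b1*b1*b1*b2*(Real.sqrt 3)*(Real.sqrt 3)*(Real.sqrt 3)*x 2 + (5)*b1*b1*b1*b1*b1*(Real.sqrt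 3)*x 4 + b1*b1*b1*b1*b1*(Real.sqrt 3)*(Real.sqrt 3)*(Real.sqrt 3)*x 4) * hs3
  · simp only [wv, Matrix.cons_val_zero, Matrix.cons_val_one, Matrix.head_cons,
      Matrix.cons_val_two, Matrix.tail_cons, Matrix.cons_val_three, Matrix.cons_val_four]
    linear_combination ((-8)*b3*x 3 + (32)*b3*b3*b3*x 3 + (-4)*b2*x 4 + (31)*b2*b3*b3*x 4 + (17)*b2*b2*b3*x 3 + (-15)*b2*b2*b3*(Real.sqrt 3)*x 0 + b2*b2*b2*x 4 + (-4)*b1*x 2 + (31)*b1*b3*b3*x 2 + (31)*b1*b2*b2*x 2 + (17)*b1*b1*b3*x 3 + (15)*b1*b1*b3*(Real.sqrt 3)*x 0 + (31)*b1*b1*b2*x 4 + b1*b1*b1*x 2) * hb + ((3)*b2*b2*b2*b3*b3*x 4 + (3)*b2*b2*b2*b2*b3*x 3 + (-3)*b2*b2*b2*b2*b3*(Real.sqrt 3)*x 0 + (-10)*b1*b2*b2*x 2 + (13)*b1*b2*b2*b3*b3*x 2 + (10)*b1*b2*b2*b2*b2*x 2 + (2)*b1*b2*b2*b2*b2*(Real.sqrt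 3)*(Real.sqrt 3)*x 2 + (-10)*b1*b1*b2*x 4 + (13)*b1*b1*b2*b3*b3*x 4 + (6)*b1*b1*b2*b2*b3*x 3 + (10)*b1*b1*b2*b2*b2*x 4 + (2)*b1*b1*b2*b2*b2*(Real.sqrt 3)*(Real.sqrt 3)*x 4 + (3)*b1*b1*b1*b3*b3*x 2 + (10)*b1*b1*b1*b2*b2*x 2 + (2)*b1*b1*b1*b2*b2*(Real.sqrt 3)*(Real.sqrt 3)*x 2 + (3)*b1*b1*b1*b1*b3*x 3 + (3)*b1*b1*b1*b1*b3*(Real.sqrt 3)*x 0 + (10)*b1*b1*b1*b1*b2*x 4 + (2)*b1*b1*b1*b1*b2*(Real.sqrt 3)*(Real.sqrt 3)*x 4) * hs3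
  · simp only [wv, Matrix.cons_val_zero, Matrix.cons_val_one, Matrix.head_cons,
      Matrix.cons_val_two, Matrix.tail_cons, Matrix.cons_val_three, Matrix.cons_val_four]
    linear_combination ((-4)*b3*x 4 + b3*b3*b3*x 4 + (-4)*b2*x 3 + (4)*b2*(Real.sqrt 3)*x 0 + (31)*b2*b3*b3*x 3 + (-1)*b2*b3*b3*(Real.sqrt 3)*x 0 + (31)*b2*b2*b3*x 4 + (16)*b2*b2*b2*x 3 + (-16)*b2*b2*b2*(Real.sqrt 3)*x 0 + (4)*b1*x 1 + (-31)*b1*b3*b3*x 1 + (-31)*b1*b2*b2*x 1 + (31)*b1*b1*b3*x 4 + (-14)*b1*b1*b2*x 3 + (-16)*b1*b1*b2*(Real.sqrt 3)*x 0 + (-1)*b1*b1*b1*x 1) * hb + ((-5)*b2*b2*b3*x 4 + (2)*b2*b2*b3*b3*b3*x 4 + (-5)*b2*b2*b2*x 3 + (5)*b2*b2*b2*(Real.sqrt 3)*x 0 + (8)*b2*b2*b2*b3*b3*x 3 + (-2)*b2*b2*b2*b3*b3*(Real.sqrt 3)*x 0 + (8)*b2*b2*b2*b2*b3*x 4 +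 b2*b2*b2*b2*b3*(Real.sqrt 3)*(Real.sqrt 3)*x 4 + (5)*b2*b2*b2*b2*b2*x 3 + (-5)*b2*b2*b2*b2*b2*(Real.sqrt 3)*x 0 + b2*b2*b2*b2*b2*(Real.sqrt 3)*(Real.sqrt 3)*x 3 + (-1)*b2*b2*b2*b2*b2*(Real.sqrt 3)*(Real.sqrt 3)*(Real.sqrt 3)*x 0 + (10)*b1*b2*b2*x 1 + (-13)*b1*b2*b2*b3*b3*x 1 + (-10)*b1*b2*b2*b2*b2*x 1 + (-2)*b1*b2*b2*b2*b2*(Real.sqrt 3)*(Real.sqrt 3)*x 1 + (-5)*b1*b1*b3*x 4 + (2)*b1*b1*b3*b3*b3*x 4 + (5)*b1*b1*b2*x 3 + (5)*b1*b1*b2*(Real.sqrt 3)*x 0 + (-2)*b1*b1*b2*b3*b3*x 3 + (-2)*b1*b1*b2*b3*b3*(Real.sqrt 3)*x 0 + (16)*b1*b1*b2*b2*b3*x 4 + (2)*b1*b1*b2*b2*b3*(Real.sqrt 3)*(Real.sqrt 3)*x 4 + (-10)*b1*b1*b2*b2*b2*(Real.sqrt 3)*x 0 + (-2)*b1*b1*b2*b2*b2*(Real.sqrt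 3)*(Real.sqrt 3)*(Real.sqrt 3)*x 0 + (-3)*b1*b1*b1*b3*b3*x 1 + (-10)*b1*b1*b1*b2*b2*x 1 + (-2)*b1*b1*b1*b2*b2*(Real.sqrt 3)*(Real.sqrt 3)*x 1 + (8)*b1*b1*b1*b1*b3*x 4 + b1*b1*b1*b1*b3*(Real.sqrt 3)*(Real.sqrt 3)*x 4 + (-5)*b1*b1*b1*b1*b2*x 3 + (-5)*b1*b1*b1*b1*b2*(Real.sqrt 3)*x 0 + (-1)*b1*b1*b1*b1*b2*(Real.sqrt 3)*(Real.sqrt 3)*x 3 + (-1)*b1*b1*b1*b1*b2*(Real.sqrt 3)*(Real.sqrt 3)*(Real.sqrt 3)*x 0) * hs3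
  · simp only [wv, Matrix.cons_val_zero, Matrix.cons_val_one, Matrix.head_cons,
      Matrix.cons_val_two, Matrix.tail_cons, Matrix.cons_val_three, Matrix.cons_val_four]
    linear_combination ((8)*b3*x 1 + (-32)*b3*b3*b3*x 1 + (4)*b2*x 2 + (-31)*b2*b3*b3*x 2 + (-17)*b2*b2*b3*x 1 + (-16)*b2*b2*b2*x 2 + (-4)*b1*x 4 + (31)*b1*b3*b3*x 4 + (-30)*b1*b2*b3*(Real.sqrt 3)*x 0 + (-14)*b1*b2*b2*x 4 + (-17)*b1*b1*b3*x 1 + (14)*b1*b1*b2*x 2 + (16)*b1*b1*b1*x 4) * hb + ((5)*b2*b2*b2*x 2 + (-8)*b2*b2*b2*b3*b3*x 2 + (-3)*b2*b2*b2*b2*b3*x 1 + (-5)*b2*b2*b2*b2*b2*x 2 + (-1)*b2*b2*b2*b2*b2*(Real.sqrt 3)*(Real.sqrt 3)*x 2 + (5)*b1*b2*b2*x 4 + (-2)*b1*b2*b2*b3*b3*x 4 + (-6)*b1*b2*b2*b2*b3*(Real.sqrt 3)*x 0 + (-5)*b1*b2*b2*b2*b2*x 4 + (-1)*b1*b2*b2*b2*b2*(Real.sqrt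 3)*(Real.sqrt 3)*x 4 + (-5)*b1*b1*b2*x 2 + (2)*b1*b1*b2*b3*b3*x 2 + (-6)*b1*b1*b2*b2*b3*x 1 + (-5)*b1*b1*b1*x 4 + (8)*b1*b1*b1*b3*b3*x 4 + (-6)*b1*b1*b1*b2*b3*(Real.sqrt 3)*x 0 + (-3)*b1*b1*b1*b1*b3*x 1 + (5)*b1*b1*b1*b1*b2*x 2 + b1*b1*b1*b1*b2*(Real.sqrt 3)*(Real.sqrt 3)*x 2 + (5)*b1*b1*b1*b1*b1*x 4 + b1*b1*b1*b1*b1*(Real.sqrt 3)*(Real.sqrt 3)*x 4) * hs3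
  · simp only [wv, Matrix.cons_val_zero, Matrix.cons_val_one, Matrix.head_cons,
      Matrix.cons_val_two, Matrix.tail_cons, Matrix.cons_val_three, Matrix.cons_val_four]
    linear_combination ((4)*b3*x 2 + (-1)*b3*b3*b3*x 2 + (4)*b2*x 1 + (-31)*b2*b3*b3*x 1 + (-31)*b2*b2*b3*x 2 + (-1)*b2*b2*b2*x 1 + (4)*b1*x 3 + (4)*b1*(Real.sqrt 3)*x 0 + (-31)*b1*b3*b3*x 3 + (-1)*b1*b3*b3*(Real.sqrt 3)*x 0 + (14)*b1*b2*b2*x 3 + (-16)*b1*b2*b2*(Real.sqrt 3)*x 0 + (-31)*b1*b1*b3*x 2 + (-31)*b1*b1*b2*x 1 + (-16)*b1*b1*b1*x 3 + (-16)*b1*b1*b1*(Real.sqrt 3)*x 0) * hb + ((5)*b2*b2*b3*x 2 + (-2)*b2*b2*b3*b3*b3*x 2 + (-3)*b2*b2*b2*b3*b3*x 1 + (-8)*b2*b2*b2*b2*b3*x 2 + (-1)*b2*b2*b2*b2*b3*(Real.sqrt 3)*(Real.sqrt 3)*x 2 + (-5)*b1*b2*b2*x 3 + (5)*b1*b2*b2*(Real.sqrt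 3)*x 0 + (2)*b1*b2*b2*b3*b3*x 3 + (-2)*b1*b2*b2*b3*b3*(Real.sqrt 3)*x 0 + (5)*b1*b2*b2*b2*b2*x 3 + (-5)*b1*b2*b2*b2*b2*(Real.sqrt 3)*x 0 + b1*b2*b2*b2*b2*(Real.sqrt 3)*(Real.sqrt 3)*x 3 + (-1)*b1*b2*b2*b2*b2*(Real.sqrt 3)*(Real.sqrt 3)*(Real.sqrt 3)*x 0 + (5)*b1*b1*b3*x 2 + (-2)*b1*b1*b3*b3*b3*x 2 + (10)*b1*b1*b2*x 1 + (-13)*b1*b1*b2*b3*b3*x 1 + (-16)*b1*b1*b2*b2*b3*x 2 + (-2)*b1*b1*b2*b2*b3*(Real.sqrt 3)*(Real.sqrt 3)*x 2 + (-10)*b1*b1*b2*b2*b2*x 1 + (-2)*b1*b1*b2*b2*b2*(Real.sqrt 3)*(Real.sqrt 3)*x 1 + (5)*b1*b1*b1*x 3 + (5)*b1*b1*b1*(Real.sqrt 3)*x 0 + (-8)*b1*b1*b1*b3*b3*x 3 + (-2)*b1*b1*b1*b3*b3*(Real.sqrt 3)*x 0 + (-10)*b1*b1*b1*b2*b2*(Real.sqrt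 3)*x 0 + (-2)*b1*b1*b1*b2*b2*(Real.sqrt 3)*(Real.sqrt 3)*(Real.sqrt 3)*x 0 + (-8)*b1*b1*b1*b1*b3*x 2 + (-1)*b1*b1*b1*b1*b3*(Real.sqrt 3)*(Real.sqrt 3)*x 2 + (-10)*b1*b1*b1*b1*b2*x 1 + (-2)*b1*b1*b1*b1*b2*(Real.sqrt 3)*(Real.sqrt 3)*x 1 + (-5)*b1*b1*b1*b1*b1*x 3 + (-5)*b1*b1*b1*b1*b1*(Real.sqrt 3)*x 0 + (-1)*b1*b1*b1*b1*b1*(Real.sqrt 3)*(Real.sqrt 3)*x 3 + (-1)*b1*b1*b1*b1*b1*(Real.sqrt 3)*(Real.sqrt 3)*(Real.sqrt 3)*x 0) * hs3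

lemma invS (Y : Fin 5 → Fin 5 → Fin 5 → ℝ)
    (hsym1 : ∀ i j k, Y i j k = Y j i k)
    (hsym2 : ∀ i j k, Y i j k = Y i k j)
    (hcub : ∀ a : Fin 5 → ℝ,
      ∑ i, ∑ j, ∑ k, Y i j k * a i * a j * a k = cubicUps a)
    (b1 b2 b3 : ℝ) (x : Fin 5 → ℝ) (m : Fin 5) :
    gq m (fun j => wv b1 b2 b3 x j + x j) - gq m (wv b1 b2 b3 x) - gq m x
      = 6 * wv b1 b2 b3 (fun i => S Y i x x) m := by
  have h := invId b1 b2 b3 x m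
  rw [show (fun i => gq i x) = (fun i => 6 * S Y i x x) from
      funext fun i => (quadId Y hsym1 hsym2 hcub i x).symm] at h
  rw [h, show wv b1 b2 b3 (fun i => 6 * S Y i x x) m
      = 6 * wv b1 b2 b3 (fun i => S Y i x x) m from by
    rcases fin5cases m with rfl | rfl | rfl | rfl | rfl <;> simp [wv] <;> ring]

lemma aux2 (Y : Fin 5 → Fin 5 → Fin 5 → ℝ)
    (hsym1 : ∀ i j k, Y i j k = Y j i k)
    (hsym2 : ∀ i j k, Y i j k = Y i k j)
    (hcub : ∀ a : Fin 5 → ℝ,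
      ∑ i, ∑ j, ∑ k, Y i j k * a i * a j * a k = cubicUps a)
    (b1 b2 b3 : ℝ) (hb : b1^2 + b2^2 + b3^2 = 1)
    (p q : Fin 5 → ℝ)
    (hp : ∀ m, wv b1 b2 b3 p m = -2 * q m)
    (hq : ∀ m, wv b1 b2 b3 q m = 2 * p m) :
    ∀ i, S Y i p p = S Y i q q ∧ S Y i p q = 0 := by
  have hpf : wv b1 b2 b3 p = fun m => -2 * q m := funext hp
  have hqf : wv b1 b2 b3 q = fun m => 2 * p m := funext hq
  have hRp : ∀ m, wv b1 b2 b3 (fun i => S Y i p p) m = -4 * S Y m p q := by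
    intro m
    have h := invS Y hsym1 hsym2 hcub b1 b2 b3 p m
    simp only [hpf] at h
    rw [← quadId Y hsym1 hsym2 hcub m (fun j => -2 * q j + p j),
        ← quadId Y hsym1 hsym2 hcub m (fun m => -2 * q m),
        ← quadId Y hsym1 hsym2 hcub m p] at h
    have a1 : S Y m (fun j => -2 * q j + p j) (fun j => -2 * q j + p j)
        = S Y m p p - 4 * S Y m p q + 4 * S Y m q q := by
      simp only [S, Fin.sum_univ_five]
      linear_combination ((-2)*(q 0*p 0))*hsym2 m 0 0 + ((-2)*(q 0*p 1))*hsym2 m 0 1 + ((-2)*(q 0*p 2))*hsym2 m 0 2 + ((-2)*(q 0*p 3))*hsym2 m 0 3 + ((-2)*(q 0*p 4))*hsym2 m 0 4 + ((-2)*(q 1*p 0))*hsym2 m 1 0 + ((-2)*(q 1*p 1))*hsym2 m 1 1 + ((-2)*(q 1*p 2))*hsym2 m 1 2 + ((-2)*(q 1*p 3))*hsym2 m 1 3 + ((-2)*(q 1*p 4))*hsym2 m 1 4 + ((-2)*(q 2*p 0))*hsym2 m 2 0 + ((-2)*(q 2*p 1))*hsym2 m 2 1 + ((-2)*(q 2*p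 2))*hsym2 m 2 2 + ((-2)*(q 2*p 3))*hsym2 m 2 3 + ((-2)*(q 2*p 4))*hsym2 m 2 4 + ((-2)*(q 3*p 0))*hsym2 m 3 0 + ((-2)*(q 3*p 1))*hsym2 m 3 1 + ((-2)*(q 3*p 2))*hsym2 m 3 2 + ((-2)*(q 3*p 3))*hsym2 m 3 3 + ((-2)*(q 3*p 4))*hsym2 m 3 4 + ((-2)*(q 4*p 0))*hsym2 m 4 0 + ((-2)*(q 4*p 1))*hsym2 m 4 1 + ((-2)*(q 4*p 2))*hsym2 m 4 2 + ((-2)*(q 4*p 3))*hsym2 m 4 3 + ((-2)*(q 4*p 4))*hsym2 m 4 4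
    have a2 : S Y m (fun m => -2 * q m) (fun m => -2 * q m) = 4 * S Y m q q := by
      simp only [S, Fin.sum_univ_five]; ring
    linarith [h, a1, a2]
  have hRq : ∀ m, wv b1 b2 b3 (fun i => S Y i q q) m = 4 * S Y m p q := by
    intro m
    have h := invS Y hsym1 hsym2 hcub b1 b2 b3 q m
    simp only [hqf] at h
    rw [← quadId Y hsym1 hsym2 hcub m (fun j => 2 * p j + q j),
        ← quadId Y hsym1 hsym2 hcub m (fun m => 2 * p m),
        ← quadId Y hsym1 hsym2 hcub m q] at h
    have a3 : S Y m (fun j => 2 * p j + q j) (fun j => 2 * p j + q j)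
        = 4 * S Y m p p + 4 * S Y m p q + S Y m q q := by
      simp only [S, Fin.sum_univ_five]
      linear_combination ((2)*(q 0*p 0))*hsym2 m 0 0 + ((2)*(q 0*p 1))*hsym2 m 0 1 + ((2)*(q 0*p 2))*hsym2 m 0 2 + ((2)*(q 0*p 3))*hsym2 m 0 3 + ((2)*(q 0*p 4))*hsym2 m 0 4 + ((2)*(q 1*p 0))*hsym2 m 1 0 + ((2)*(q 1*p 1))*hsym2 m 1 1 + ((2)*(q 1*p 2))*hsym2 m 1 2 + ((2)*(q 1*p 3))*hsym2 m 1 3 + ((2)*(q 1*p 4))*hsym2 m 1 4 + ((2)*(q 2*p 0))*hsym2 m 2 0 + ((2)*(q 2*p 1))*hsym2 m 2 1 + ((2)*(q 2*p 2))*hsym2 m 2 2 + ((2)*(q 2*p 3))*hsym2 m 2 3 + ((2)*(q 2*p 4))*hsym2 m 2 4 + ((2)*(q 3*p 0))*hsym2 m 3 0 + ((2)*(q 3*p 1))*hsym2 m 3 1 + ((2)*(q 3*p 2))*hsym2 m 3 2 + ((2)*(q 3*p 3))*hsym2 m 3 3 + ((2)*(q 3*p 4))*hsym2 m 3 4 +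 ((2)*(q 4*p 0))*hsym2 m 4 0 + ((2)*(q 4*p 1))*hsym2 m 4 1 + ((2)*(q 4*p 2))*hsym2 m 4 2 + ((2)*(q 4*p 3))*hsym2 m 4 3 + ((2)*(q 4*p 4))*hsym2 m 4 4
    have a4 : S Y m (fun m => 2 * p m) (fun m => 2 * p m) = 4 * S Y m p p := by
      simp only [S, Fin.sum_univ_five]; ring
    linarith [h, a3, a4]
  have a7 : ∀ m, S Y m (fun j => p j + q j) (fun j => p j + q j)
      = S Y m p p + 2 * S Y m p q + S Y m q q := by
    intro m
    simp only [S, Fin.sum_univ_five]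
    linear_combination ((1)*(q 0*p 0))*hsym2 m 0 0 + ((1)*(q 0*p 1))*hsym2 m 0 1 + ((1)*(q 0*p 2))*hsym2 m 0 2 + ((1)*(q 0*p 3))*hsym2 m 0 3 + ((1)*(q 0*p 4))*hsym2 m 0 4 + ((1)*(q 1*p 0))*hsym2 m 1 0 + ((1)*(q 1*p 1))*hsym2 m 1 1 + ((1)*(q 1*p 2))*hsym2 m 1 2 + ((1)*(q 1*p 3))*hsym2 m 1 3 + ((1)*(q 1*p 4))*hsym2 m 1 4 + ((1)*(q 2*p 0))*hsym2 m 2 0 + ((1)*(q 2*p 1))*hsym2 m 2 1 + ((1)*(q 2*p 2))*hsym2 m 2 2 + ((1)*(q 2*p 3))*hsym2 m 2 3 + ((1)*(q 2*p 4))*hsym2 m 2 4 + ((1)*(q 3*p 0))*hsym2 m 3 0 + ((1)*(q 3*p 1))*hsym2 m 3 1 + ((1)*(q 3*p 2))*hsym2 m 3 2 + ((1)*(q 3*p 3))*hsym2 m 3 3 + ((1)*(q 3*p 4))*hsym2 m 3 4 + ((1)*(q 4*p 0))*hsym2 m 4 0 + ((1)*(q 4*p 1))*hsym2 m 4 1 +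 ((1)*(q 4*p 2))*hsym2 m 4 2 + ((1)*(q 4*p 3))*hsym2 m 4 3 + ((1)*(q 4*p 4))*hsym2 m 4 4
  have hRpq : ∀ m, wv b1 b2 b3 (fun i => S Y i p q) m
      = 2 * S Y m p p - 2 * S Y m q q := by
    intro m
    have hpq : ∀ m, wv b1 b2 b3 (fun j => p j + q j) m = -2 * q m + 2 * p m := by
      intro m
      have e : wv b1 b2 b3 (fun j => p j + q j) m = wv b1 b2 b3 p m + wv b1 b2 b3 q m := by
        rcases fin5cases m with rfl | rfl | rfl | rfl | rfl <;> simp [wv] <;> ring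
      rw [e, hp m, hq m]
    have hpqf : wv b1 b2 b3 (fun j => p j + q j) = fun m => -2 * q m + 2 * p m := funext hpq
    have h := invS Y hsym1 hsym2 hcub b1 b2 b3 (fun j => p j + q j) m
    simp only [hpqf] at h
    rw [show (fun i => S Y i (fun j => p j + q j) (fun j => p j + q j))
        = (fun i => S Y i p p + 2 * S Y i p q + S Y i q q) from funext a7] at h
    rw [show wv b1 b2 b3 (fun i => S Y i p p + 2 * S Y i p q + S Y i q q) m
        = wv b1 b2 b3 (fun i => S Y i p p) m + 2 * wv b1 b2 b3 (fun i => S Y i p q) m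
          + wv b1 b2 b3 (fun i => S Y i q q) m from by
      rcases fin5cases m with rfl | rfl | rfl | rfl | rfl <;> simp [wv] <;> ring] at h
    rw [← quadId Y hsym1 hsym2 hcub m (fun j => -2 * q j + 2 * p j + (p j + q j)),
        ← quadId Y hsym1 hsym2 hcub m (fun m => -2 * q m + 2 * p m),
        ← quadId Y hsym1 hsym2 hcub m (fun j => p j + q j)] at h
    have a5 : S Y m (fun j => -2 * q j + 2 * p j + (p j + q j))
        (fun j => -2 * q j + 2 * p j + (p j + q j))
        = 9 * S Y m p p - 6 * S Y m p q + S Y m q q := by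
      simp only [S, Fin.sum_univ_five]
      linear_combination ((-3)*(q 0*p 0))*hsym2 m 0 0 + ((-3)*(q 0*p 1))*hsym2 m 0 1 + ((-3)*(q 0*p 2))*hsym2 m 0 2 + ((-3)*(q 0*p 3))*hsym2 m 0 3 + ((-3)*(q 0*p 4))*hsym2 m 0 4 + ((-3)*(q 1*p 0))*hsym2 m 1 0 + ((-3)*(q 1*p 1))*hsym2 m 1 1 + ((-3)*(q 1*p 2))*hsym2 m 1 2 + ((-3)*(q 1*p 3))*hsym2 m 1 3 + ((-3)*(q 1*p 4))*hsym2 m 1 4 + ((-3)*(q 2*p 0))*hsym2 m 2 0 + ((-3)*(q 2*p 1))*hsym2 m 2 1 + ((-3)*(q 2*p 2))*hsym2 m 2 2 + ((-3)*(q 2*p 3))*hsym2 m 2 3 + ((-3)*(q 2*p 4))*hsym2 m 2 4 + ((-3)*(q 3*p 0))*hsym2 m 3 0 + ((-3)*(q 3*p 1))*hsym2 m 3 1 + ((-3)*(q 3*p 2))*hsym2 m 3 2 + ((-3)*(q 3*p 3))*hsym2 m 3 3 + ((-3)*(q 3*p 4))*hsym2 m 3 4 + ((-3)*(q 4*p 0))*hsym2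 m 4 0 + ((-3)*(q 4*p 1))*hsym2 m 4 1 + ((-3)*(q 4*p 2))*hsym2 m 4 2 + ((-3)*(q 4*p 3))*hsym2 m 4 3 + ((-3)*(q 4*p 4))*hsym2 m 4 4
    have a6 : S Y m (fun m => -2 * q m + 2 * p m) (fun m => -2 * q m + 2 * p m)
        = 4 * S Y m p p - 8 * S Y m p q + 4 * S Y m q q := by
      simp only [S, Fin.sum_univ_five]
      linear_combination ((-4)*(q 0*p 0))*hsym2 m 0 0 + ((-4)*(q 0*p 1))*hsym2 m 0 1 + ((-4)*(q 0*p 2))*hsym2 m 0 2 + ((-4)*(q 0*p 3))*hsym2 m 0 3 + ((-4)*(q 0*p 4))*hsym2 m 0 4 + ((-4)*(q 1*p 0))*hsym2 m 1 0 + ((-4)*(q 1*p 1))*hsym2 m 1 1 + ((-4)*(q 1*p 2))*hsym2 m 1 2 + ((-4)*(q 1*p 3))*hsym2 m 1 3 + ((-4)*(q 1*p 4))*hsym2 m 1 4 + ((-4)*(q 2*p 0))*hsym2 m 2 0 + ((-4)*(q 2*p 1))*hsym2 m 2 1 + ((-4)*(q 2*p 2))*hsym2 m 2 2 + ((-4)*(q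 2*p 3))*hsym2 m 2 3 + ((-4)*(q 2*p 4))*hsym2 m 2 4 + ((-4)*(q 3*p 0))*hsym2 m 3 0 + ((-4)*(q 3*p 1))*hsym2 m 3 1 + ((-4)*(q 3*p 2))*hsym2 m 3 2 + ((-4)*(q 3*p 3))*hsym2 m 3 3 + ((-4)*(q 3*p 4))*hsym2 m 3 4 + ((-4)*(q 4*p 0))*hsym2 m 4 0 + ((-4)*(q 4*p 1))*hsym2 m 4 1 + ((-4)*(q 4*p 2))*hsym2 m 4 2 + ((-4)*(q 4*p 3))*hsym2 m 4 3 + ((-4)*(q 4*p 4))*hsym2 m 4 4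
    linarith [h, a5, a6, a7 m, hRp m, hRq m]
  have hU : ∀ m, wv b1 b2 b3 (fun i => S Y i p p - S Y i q q) m = -8 * S Y m p q := by
    intro m
    have e : wv b1 b2 b3 (fun i => S Y i p p - S Y i q q) m
        = wv b1 b2 b3 (fun i => S Y i p p) m - wv b1 b2 b3 (fun i => S Y i q q) m := by
      rcases fin5cases m with rfl | rfl | rfl | rfl | rfl <;> simp [wv] <;> ring
    rw [e, hRp m, hRq m]; ring
  have hz0 : ∀ m, S Y m p q = 0 := by
    have hUf : wv b1 b2 b3 (fun i => S Y i p p - S Y i q q)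
        = fun m => -8 * S Y m p q := funext hU
    have c1 : wv b1 b2 b3 (fun m => -8 * S Y m p q)
        = fun m => -16 * (S Y m p p - S Y m q q) := by
      funext m
      have e : wv b1 b2 b3 (fun m => -8 * S Y m p q) m
          = -8 * wv b1 b2 b3 (fun i => S Y i p q) m := by
        rcases fin5cases m with rfl | rfl | rfl | rfl | rfl <;> simp [wv] <;> ring
      rw [e, hRpq m]; ring
    have c2 : wv b1 b2 b3 (fun m => -16 * (S Y m p p - S Y m q q))
        = fun m => 128 * S Y m p q := by
      funext m
      have e : wv b1 b2 b3 (fun m => -16 * (S Y m p p - S Y m q q)) m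
          = -16 * wv b1 b2 b3 (fun i => S Y i p p - S Y i q q) m := by
        rcases fin5cases m with rfl | rfl | rfl | rfl | rfl <;> simp [wv] <;> ring
      rw [e, hU m]; ring
    have c3 : wv b1 b2 b3 (fun m => 128 * S Y m p q)
        = fun m => 256 * (S Y m p p - S Y m q q) := by
      funext m
      have e : wv b1 b2 b3 (fun m => 128 * S Y m p q) m
          = 128 * wv b1 b2 b3 (fun i => S Y i p q) m := by
        rcases fin5cases m with rfl | rfl | rfl | rfl | rfl <;> simp [wv] <;> ring
      rw [e, hRpq m]; ring
    have c4 : wv b1 b2 b3 (fun m => 256 * (S Y m p p - S Y m q q))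
        = fun m => -2048 * S Y m p q := by
      funext m
      have e : wv b1 b2 b3 (fun m => 256 * (S Y m p p - S Y m q q)) m
          = 256 * wv b1 b2 b3 (fun i => S Y i p p - S Y i q q) m := by
        rcases fin5cases m with rfl | rfl | rfl | rfl | rfl <;> simp [wv] <;> ring
      rw [e, hU m]; ring
    intro m
    have h5 := quintId b1 b2 b3 hb (fun i => S Y i p p - S Y i q q) m
    simp only [hUf, c1, c2, c3, c4] at h5
    linarith [h5]
  have hu0 : ∀ m, S Y m p p - S Y m q q = 0 := by
    intro m
    have h := hRpq m
    rw [show (fun i => S Y i p q) = (fun _ : Fin 5 => (0:ℝ)) from funext hz0] at h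
    have e0 : wv b1 b2 b3 (fun _ : Fin 5 => (0:ℝ)) m = 0 := by
      rcases fin5cases m with rfl | rfl | rfl | rfl | rfl <;> simp [wv]
    rw [e0] at h
    linarith [h]
  exact fun i => ⟨by have := hu0 i; linarith, hz0 i⟩
/-- if ω = b₁E₁ + b₂E₂ + b₃E₃ with b₁² + b₂² + b₃² = 1 and n ∈ ℂ⁵
satisfies ωn = ±2i·n, then n is null for the complexified Υ: Υ_{ijk}nⱼnₖ = 0 ∀i. -/
theorem stmt18 (Y : Fin 5 → Fin 5 → Fin 5 → ℝ)
    (hsym1 : ∀ i j k, Y i j k = Y j i k)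
    (hsym2 : ∀ i j k, Y i j k = Y i k j)
    (hcub : ∀ a : Fin 5 → ℝ,
      ∑ i, ∑ j, ∑ k, Y i j k * a i * a j * a k = cubicUps a)
    (b1 b2 b3 : ℝ) (hb : b1^2 + b2^2 + b3^2 = 1)
    (n : Fin 5 → ℂ)
    (hn : ((b1 : ℂ) • (E1.map Complex.ofReal) + (b2 : ℂ) • (E2.map Complex.ofReal)
            + (b3 : ℂ) • (E3.map Complex.ofReal)).mulVec n = (2 * Complex.I) • n ∨
          ((b1 : ℂ) • (E1.map Complex.ofReal) + (b2 : ℂ) • (E2.map Complex.ofReal)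
            + (b3 : ℂ) • (E3.map Complex.ofReal)).mulVec n = (-(2 * Complex.I)) • n) :
    ∀ i, ∑ j, ∑ k, (Y i j k : ℂ) * n j * n k = 0 := by
  rcases hn with hn | hn
  ·
    have h0 := congrFun hn 0
    have h1 := congrFun hn 1
    have h2 := congrFun hn 2
    have h3 := congrFun hn 3
    have h4 := congrFun hn 4
    simp [Matrix.mulVec, dotProduct, E1, E2, E3, Fin.sum_univ_five,
      Matrix.map_apply] at h0 h1 h2 h3 h4
    have hre0 := congrArg Complex.re h0
    have him0 := congrArg Complex.im h0
    have hre1 := congrArg Complex.re h1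
    have him1 := congrArg Complex.im h1
    have hre2 := congrArg Complex.re h2
    have him2 := congrArg Complex.im h2
    have hre3 := congrArg Complex.re h3
    have him3 := congrArg Complex.im h3
    have hre4 := congrArg Complex.re h4
    have him4 := congrArg Complex.im h4
    simp [Complex.add_re, Complex.mul_re, Complex.add_im, Complex.mul_im]
      at hre0 him0 hre1 him1 hre2 him2 hre3 him3 hre4 him4
    have hp : ∀ m, wv b1 b2 b3 (fun j => (n j).re) m = -2 * (n m).im := by
      intro m
      rcases fin5cases m with rfl | rfl | rfl | rfl | rfl
      · simp only [wv, Matrix.cons_val_zero, Matrix.cons_val_one, Matrix.head_cons,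
        Matrix.cons_val_two, Matrix.tail_cons, Matrix.cons_val_three, Matrix.cons_val_four]
        linear_combination hre0
      · simp only [wv, Matrix.cons_val_zero, Matrix.cons_val_one, Matrix.head_cons,
        Matrix.cons_val_two, Matrix.tail_cons, Matrix.cons_val_three, Matrix.cons_val_four]
        linear_combination hre1
      · simp only [wv, Matrix.cons_val_zero, Matrix.cons_val_one, Matrix.head_cons,
        Matrix.cons_val_two, Matrix.tail_cons, Matrix.cons_val_three, Matrix.cons_val_four]
        linear_combination hre2
      · simp only [wv, Matrix.cons_val_zero, Matrix.cons_val_one, Matrix.head_cons,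
        Matrix.cons_val_two, Matrix.tail_cons, Matrix.cons_val_three, Matrix.cons_val_four]
        linear_combination hre3
      · simp only [wv, Matrix.cons_val_zero, Matrix.cons_val_one, Matrix.head_cons,
        Matrix.cons_val_two, Matrix.tail_cons, Matrix.cons_val_three, Matrix.cons_val_four]
        linear_combination hre4
    have hq : ∀ m, wv b1 b2 b3 (fun j => (n j).im) m = 2 * (n m).re := by
      intro m
      rcases fin5cases m with rfl | rfl | rfl | rfl | rfl
      · simp only [wv, Matrix.cons_val_zero, Matrix.cons_val_one, Matrix.head_cons,
        Matrix.cons_val_two, Matrix.tail_cons, Matrix.cons_val_three, Matrix.cons_val_four]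
        linear_combination him0
      · simp only [wv, Matrix.cons_val_zero, Matrix.cons_val_one, Matrix.head_cons,
        Matrix.cons_val_two, Matrix.tail_cons, Matrix.cons_val_three, Matrix.cons_val_four]
        linear_combination him1
      · simp only [wv, Matrix.cons_val_zero, Matrix.cons_val_one, Matrix.head_cons,
        Matrix.cons_val_two, Matrix.tail_cons, Matrix.cons_val_three, Matrix.cons_val_four]
        linear_combination him2
      · simp only [wv, Matrix.cons_val_zero, Matrix.cons_val_one, Matrix.head_cons,
        Matrix.cons_val_two, Matrix.tail_cons, Matrix.cons_val_three, Matrix.cons_val_four]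
        linear_combination him3
      · simp only [wv, Matrix.cons_val_zero, Matrix.cons_val_one, Matrix.head_cons,
        Matrix.cons_val_two, Matrix.tail_cons, Matrix.cons_val_three, Matrix.cons_val_four]
        linear_combination him4
    have key := aux2 Y hsym1 hsym2 hcub b1 b2 b3 hb (fun j => (n j).re) (fun j => (n j).im) hp hq
    intro i
    obtain ⟨k1, k2⟩ := key i
    simp only [S, Fin.sum_univ_five] at k1 k2
    apply Complex.ext
    · simp only [Fin.sum_univ_five, Complex.add_re, Complex.mul_re, Complex.mul_im,
        Complex.ofReal_re, Complex.ofReal_im, Complex.zero_re]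
      linear_combination k1
    · simp only [Fin.sum_univ_five, Complex.add_im, Complex.mul_re, Complex.mul_im,
        Complex.ofReal_re, Complex.ofReal_im, Complex.zero_im]
      linear_combination 2*k2 + ((n 0).im*(n 0).re)*hsym2 i 0 0 + ((n 0).im*(n 1).re)*hsym2 i 0 1 + ((n 0).im*(n 2).re)*hsym2 i 0 2 + ((n 0).im*(n 3).re)*hsym2 i 0 3 + ((n 0).im*(n 4).re)*hsym2 i 0 4 + ((n 1).im*(n 0).re)*hsym2 i 1 0 + ((n 1).im*(n 1).re)*hsym2 i 1 1 + ((n 1).im*(n 2).re)*hsym2 i 1 2 + ((n 1).im*(n 3).re)*hsym2 i 1 3 + ((n 1).im*(n 4).re)*hsym2 i 1 4 + ((n 2).im*(n 0).re)*hsym2 i 2 0 + ((n 2).im*(n 1).re)*hsym2 i 2 1 + ((n 2).im*(n 2).re)*hsym2 i 2 2 + ((n 2).im*(n 3).re)*hsym2 i 2 3 + ((n 2).im*(n 4).re)*hsym2 i 2 4 + ((n 3).im*(n 0).re)*hsym2 i 3 0 + ((n 3).im*(n 1).re)*hsym2 i 3 1 + ((n 3).im*(n 2).re)*hsym2 i 3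 2 + ((n 3).im*(n 3).re)*hsym2 i 3 3 + ((n 3).im*(n 4).re)*hsym2 i 3 4 + ((n 4).im*(n 0).re)*hsym2 i 4 0 + ((n 4).im*(n 1).re)*hsym2 i 4 1 + ((n 4).im*(n 2).re)*hsym2 i 4 2 + ((n 4).im*(n 3).re)*hsym2 i 4 3 + ((n 4).im*(n 4).re)*hsym2 i 4 4
  ·
    have h0 := congrFun hn 0
    have h1 := congrFun hn 1
    have h2 := congrFun hn 2
    have h3 := congrFun hn 3
    have h4 := congrFun hn 4
    simp [Matrix.mulVec, dotProduct, E1, E2, E3, Fin.sum_univ_five,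
      Matrix.map_apply] at h0 h1 h2 h3 h4
    have hre0 := congrArg Complex.re h0
    have him0 := congrArg Complex.im h0
    have hre1 := congrArg Complex.re h1
    have him1 := congrArg Complex.im h1
    have hre2 := congrArg Complex.re h2
    have him2 := congrArg Complex.im h2
    have hre3 := congrArg Complex.re h3
    have him3 := congrArg Complex.im h3
    have hre4 := congrArg Complex.re h4
    have him4 := congrArg Complex.im h4
    simp [Complex.add_re, Complex.mul_re, Complex.add_im, Complex.mul_im]
      at hre0 him0 hre1 him1 hre2 him2 hre3 him3 hre4 him4
    have hb' : (-b1)^2 + (-b2)^2 + (-b3)^2 = 1 := by linear_combination hb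
    have hp : ∀ m, wv (-b1) (-b2) (-b3) (fun j => (n j).re) m = -2 * (n m).im := by
      intro m
      rcases fin5cases m with rfl | rfl | rfl | rfl | rfl
      · simp only [wv, Matrix.cons_val_zero, Matrix.cons_val_one, Matrix.head_cons,
        Matrix.cons_val_two, Matrix.tail_cons, Matrix.cons_val_three, Matrix.cons_val_four]
        linear_combination -hre0
      · simp only [wv, Matrix.cons_val_zero, Matrix.cons_val_one, Matrix.head_cons,
        Matrix.cons_val_two, Matrix.tail_cons, Matrix.cons_val_three, Matrix.cons_val_four]
        linear_combination -hre1
      · simp only [wv, Matrix.cons_val_zero, Matrix.cons_val_one, Matrix.head_cons,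
        Matrix.cons_val_two, Matrix.tail_cons, Matrix.cons_val_three, Matrix.cons_val_four]
        linear_combination -hre2
      · simp only [wv, Matrix.cons_val_zero, Matrix.cons_val_one, Matrix.head_cons,
        Matrix.cons_val_two, Matrix.tail_cons, Matrix.cons_val_three, Matrix.cons_val_four]
        linear_combination -hre3
      · simp only [wv, Matrix.cons_val_zero, Matrix.cons_val_one, Matrix.head_cons,
        Matrix.cons_val_two, Matrix.tail_cons, Matrix.cons_val_three, Matrix.cons_val_four]
        linear_combination -hre4
    have hq : ∀ m, wv (-b1) (-b2) (-b3) (fun j => (n j).im) m = 2 * (n m).re := by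
      intro m
      rcases fin5cases m with rfl | rfl | rfl | rfl | rfl
      · simp only [wv, Matrix.cons_val_zero, Matrix.cons_val_one, Matrix.head_cons,
        Matrix.cons_val_two, Matrix.tail_cons, Matrix.cons_val_three, Matrix.cons_val_four]
        linear_combination -him0
      · simp only [wv, Matrix.cons_val_zero, Matrix.cons_val_one, Matrix.head_cons,
        Matrix.cons_val_two, Matrix.tail_cons, Matrix.cons_val_three, Matrix.cons_val_four]
        linear_combination -him1
      · simp only [wv, Matrix.cons_val_zero, Matrix.cons_val_one, Matrix.head_cons,
        Matrix.cons_val_two, Matrix.tail_cons, Matrix.cons_val_three, Matrix.cons_val_four]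
        linear_combination -him2
      · simp only [wv, Matrix.cons_val_zero, Matrix.cons_val_one, Matrix.head_cons,
        Matrix.cons_val_two, Matrix.tail_cons, Matrix.cons_val_three, Matrix.cons_val_four]
        linear_combination -him3
      · simp only [wv, Matrix.cons_val_zero, Matrix.cons_val_one, Matrix.head_cons,
        Matrix.cons_val_two, Matrix.tail_cons, Matrix.cons_val_three, Matrix.cons_val_four]
        linear_combination -him4
    have key := aux2 Y hsym1 hsym2 hcub (-b1) (-b2) (-b3) hb' (fun j => (n j).re) (fun j => (n j).im) hp hq
    intro i
    obtain ⟨k1, k2⟩ := key i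
    simp only [S, Fin.sum_univ_five] at k1 k2
    apply Complex.ext
    · simp only [Fin.sum_univ_five, Complex.add_re, Complex.mul_re, Complex.mul_im,
        Complex.ofReal_re, Complex.ofReal_im, Complex.zero_re]
      linear_combination k1
    · simp only [Fin.sum_univ_five, Complex.add_im, Complex.mul_re, Complex.mul_im,
        Complex.ofReal_re, Complex.ofReal_im, Complex.zero_im]
      linear_combination 2*k2 + ((n 0).im*(n 0).re)*hsym2 i 0 0 + ((n 0).im*(n 1).re)*hsym2 i 0 1 + ((n 0).im*(n 2).re)*hsym2 i 0 2 + ((n 0).im*(n 3).re)*hsym2 i 0 3 + ((n 0).im*(n 4).re)*hsym2 i 0 4 + ((n 1).im*(n 0).re)*hsym2 i 1 0 + ((n 1).im*(n 1).re)*hsym2 i 1 1 + ((n 1).im*(n 2).re)*hsym2 i 1 2 + ((n 1).im*(n 3).re)*hsym2 i 1 3 + ((n 1).im*(n 4).re)*hsym2 i 1 4 + ((n 2).im*(n 0).re)*hsym2 i 2 0 + ((n 2).im*(n 1).re)*hsym2 i 2 1 + ((n 2).im*(n 2).re)*hsym2 i 2 2 + ((n 2).im*(n 3).re)*hsym2 i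 2 3 + ((n 2).im*(n 4).re)*hsym2 i 2 4 + ((n 3).im*(n 0).re)*hsym2 i 3 0 + ((n 3).im*(n 1).re)*hsym2 i 3 1 + ((n 3).im*(n 2).re)*hsym2 i 3 2 + ((n 3).im*(n 3).re)*hsym2 i 3 3 + ((n 3).im*(n 4).re)*hsym2 i 3 4 + ((n 4).im*(n 0).re)*hsym2 i 4 0 + ((n 4).im*(n 1).re)*hsym2 i 4 1 + ((n 4).im*(n 2).re)*hsym2 i 4 2 + ((n 4).im*(n 3).re)*hsym2 i 4 3 + ((n 4).im*(n 4).re)*hsym2 i 4 4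
end
end

section
/- Let t₁,…,t₁₀ be real numbers with t₁₀ ≠ 0. Then the five quadratic equations t₃t₁₀ + t₆t₈ − t₅t₉ = 0, t₁t₁₀ + t₅t₇ − t₄t₈ = 0, t₃t₇ − t₂t₈ + t₁t₉ = 0, t₂t₁₀ + t₆t₇ − t₄t₉ = 0, t₃t₄ − t₂t₅ + t₁t₆ = 0 hold simultaneously if and only if t₁ = (t₄t₈ − t₅t₇)/t₁₀, t₂ = (t₄t₉ − t₆t₇)/t₁₀ and t₃ = (t₅t₉ − t₆t₈)/t₁₀. -/
/-- for real t₁,…,t₁₀ with t₁₀ ≠ 0, the five quadratic Bianchi-identity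
constraints hold simultaneously iff t₁ = (t₄t₈ − t₅t₇)/t₁₀, t₂ = (t₄t₉ − t₆t₇)/t₁₀ and
t₃ = (t₅t₉ − t₆t₈)/t₁₀. -/
theorem stmt19 (t1 t2 t3 t4 t5 t6 t7 t8 t9 t10 : ℝ) (h10 : t10 ≠ 0) :
    (t3 * t10 + t6 * t8 - t5 * t9 = 0 ∧
     t1 * t10 + t5 * t7 - t4 * t8 = 0 ∧
     t3 * t7 - t2 * t8 + t1 * t9 = 0 ∧
     t2 * t10 + t6 * t7 - t4 * t9 = 0 ∧
     t3 * t4 - t2 * t5 + t1 * t6 = 0) ↔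
    (t1 = (t4 * t8 - t5 * t7) / t10 ∧
     t2 = (t4 * t9 - t6 * t7) / t10 ∧
     t3 = (t5 * t9 - t6 * t8) / t10) := by
  constructor
  · rintro ⟨h1, h2, h3, h4, h5⟩
    refine ⟨?_, ?_, ?_⟩ <;> field_simp <;> linarith
  · rintro ⟨h1, h2, h3⟩
    subst h1 h2 h3
    refine ⟨?_, ?_, ?_, ?_, ?_⟩ <;> field_simp <;> ring
end
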